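/- arXiv:2305.17643 — 5 statements merged into one kernel-verified Lean document; each statement's English description precedes it below -/
import Mathlib

section
/- (Proposition S2, semiparametric efficiency bound for the average causal effect on the treated: second-moment formula.) Assume e := P(Z=1) > 0 and let τ_T = E[Y(1) − Y(0) ∣ Z=1]. Define φ_T = Z·(Y − ε0(X)·μ0(X) − τ_T)/e + ε0(X)·e(X)·(1−Z)·(Y − μ0(X)) / (e·(1−e(X))). Assume Z·Y and (1−Z)·Y are square-integrable together with all displayed integrands, and let v1(X), v0(X) be 𝔛-measurable conditional variances satisfying v1(X)·e(X) = E[Z·(Y−μ1(X))² ∣ 𝔛] and v0(X)·(1−e(X)) = E[(1−Z)·(Y−μ0(X))² ∣ 𝔛] almost surely. Then E[φ_T²] = E[ e(X)·v1(X)/e² + e(X)²·ε0(X)²·v0(X)/(e²·(1−e(X))) ] + E[ e(X)·(μ1(X) − ε0(X)·μ0(X) − τ_T)²/e² ]. -/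
/-!
Since `Z` is binary, `φ_T = Z (Y - B) / e + (1 - Z) k (Y - μ₀)` with `𝔛`-measurable
`B = ε₀ μ₀ + τ_T` and `k = ε₀ e(X) / (e (1 - e(X)))`, and `φ_T²` has no cross term.
Conditioning on `𝔛`, the control part gives `k² v₀ (1 - e(X))`, and the treated part is a
bias–variance decomposition: the residual `Z (Y - μ₁)` has conditional mean zero, so
`E[Z (Y - B)² | 𝔛] = (v₁ + (μ₁ - B)²) e(X)`.

The real work is the integrability of `μ₁² Z` and `μ₀² (1 - Z)`. For `D ∈ {Z, 1 - Z}` the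
conditional Cauchy–Schwarz inequality `E[D Y | 𝔛]² ≤ E[D | 𝔛] E[(D Y)² | 𝔛]` bounds
`μ₁² e(X)` and `μ₀² (1 - e(X))` by integrable functions, and the tower property
`E[g D] = E[g E[D | 𝔛]]` for `𝔛`-measurable `g ≥ 0` transfers this to `μ₁² Z` and `μ₀² (1 - Z)`.
-/

open MeasureTheory Filter
open scoped ENNReal

section ConditionalExpectation

variable {Ω : Type*} {m m₀ : MeasurableSpace Ω} {μ : Measure Ω}

theorem lintegral_mul_condLExp (hm : m ≤ m₀) [SigmaFinite (μ.trim hm)] {f g : Ω → ℝ≥0∞}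
    (hg : Measurable[m] g) (hf : AEMeasurable f μ) :
    ∫⁻ ω, g ω * μ⁻[f|m] ω ∂μ = ∫⁻ ω, g ω * f ω ∂μ := by
  have htrim : (μ.withDensity μ⁻[f|m]).trim hm = (μ.withDensity f).trim hm := by
    refine @Measure.ext _ m _ _ fun s hs ↦ ?_
    rw [trim_measurableSet_eq hm hs, trim_measurableSet_eq hm hs,
      withDensity_apply _ (hm s hs), withDensity_apply _ (hm s hs), setLIntegral_condLExp _ _ _ hs]
  have hg₀ : Measurable g := hg.mono hm le_rfl
  calc ∫⁻ ω, g ω * μ⁻[f|m] ω ∂μ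
      = ∫⁻ ω, g ω ∂(μ.withDensity μ⁻[f|m]).trim hm := by
        rw [lintegral_trim hm hg, lintegral_withDensity_eq_lintegral_mul _
          (measurable_condLExp' _ _ _) hg₀]
        simp only [Pi.mul_apply, mul_comm]
    _ = ∫⁻ ω, g ω * f ω ∂μ := by
        rw [htrim, lintegral_trim hm hg, lintegral_withDensity_eq_lintegral_mul₀ hf
          hg₀.aemeasurable]
        simp only [Pi.mul_apply, mul_comm]

theorem integrable_mul_of_integrable_mul_condExp (hm : m ≤ m₀) [SigmaFinite (μ.trim hm)]
    {f g : Ω → ℝ} (hf : Integrable f μ) (hf₀ : 0 ≤ᵐ[μ] f) (hg : StronglyMeasurable[m] g)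
    (hgf : Integrable (fun ω ↦ g ω * μ[f|m] ω) μ) :
    Integrable (fun ω ↦ g ω * f ω) μ := by
  refine ⟨(hg.mono hm).aestronglyMeasurable.mul hf.1, ?_⟩
  calc ∫⁻ ω, ‖g ω * f ω‖ₑ ∂μ
      = ∫⁻ ω, ‖g ω‖ₑ * ENNReal.ofReal (f ω) ∂μ := by
        refine lintegral_congr_ae ?_
        filter_upwards [hf₀] with ω hω
        rw [enorm_mul, Real.enorm_of_nonneg hω]
    _ = ∫⁻ ω, ‖g ω‖ₑ * μ⁻[fun ω ↦ ENNReal.ofReal (f ω)|m] ω ∂μ :=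
        (lintegral_mul_condLExp hm hg.enorm hf.1.aemeasurable.ennreal_ofReal).symm
    _ = ∫⁻ ω, ‖g ω * μ[f|m] ω‖ₑ ∂μ := by
        refine lintegral_congr_ae ?_
        filter_upwards [condLExp_ofReal m hf hf₀, condExp_nonneg (m := m) hf₀] with ω hω hω₀
        rw [hω, enorm_mul, Real.enorm_of_nonneg hω₀]
    _ < ∞ := hgf.2

theorem sq_le_mul_of_forall_rat_nonneg {a b c : ℝ}
    (h : ∀ q : ℚ, 0 ≤ a - 2 * q * b + q ^ 2 * c) : b ^ 2 ≤ a * c := by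
  have hquad : ∀ x : ℝ, 0 ≤ c * (x * x) + (-2 * b) * x + a := fun x ↦
    Rat.denseRange_cast.induction_on x (isClosed_le continuous_const (by fun_prop))
      fun q ↦ by linarith [h q]
  have hdiscrim := discrim_le_zero hquad
  rw [discrim] at hdiscrim
  linarith

theorem condExp_mul_sq_le {f g : Ω → ℝ} (hf : MemLp f 2 μ) (hg : MemLp g 2 μ) :
    ∀ᵐ ω ∂μ, μ[fun ω ↦ f ω * g ω|m] ω ^ 2
      ≤ μ[fun ω ↦ f ω ^ 2|m] ω * μ[fun ω ↦ g ω ^ 2|m] ω := by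
  -- Each `q` costs a null set, so only countably many `q` can be used simultaneously.
  have hquad : ∀ q : ℚ, ∀ᵐ ω ∂μ, 0 ≤ μ[fun ω ↦ f ω ^ 2|m] ω
      - 2 * q * μ[fun ω ↦ f ω * g ω|m] ω + q ^ 2 * μ[fun ω ↦ g ω ^ 2|m] ω := by
    intro q
    have hnonneg : 0 ≤ᵐ[μ] μ[fun ω ↦ (f ω - q * g ω) ^ 2|m] :=
      condExp_nonneg (ae_of_all _ fun ω ↦ sq_nonneg _)
    have hexpand : (fun ω ↦ (f ω - q * g ω) ^ 2) = (fun ω ↦ f ω ^ 2)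
        + (-2 * q : ℝ) • (fun ω ↦ f ω * g ω) + ((q : ℝ) ^ 2) • fun ω ↦ g ω ^ 2 := by
      funext ω
      simp only [Pi.add_apply, Pi.smul_apply, smul_eq_mul]
      ring
    have hf2 := hf.integrable_sq
    have hfg : Integrable (fun ω ↦ f ω * g ω) μ := hf.integrable_mul hg
    rw [hexpand] at hnonneg
    filter_upwards [hnonneg,
      condExp_add (hf2.add (hfg.smul (-2 * q : ℝ))) (hg.integrable_sq.smul ((q : ℝ) ^ 2)) m,
      condExp_add hf2 (hfg.smul (-2 * q : ℝ)) m,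
      condExp_smul (-2 * q : ℝ) (fun ω ↦ f ω * g ω) m,
      condExp_smul ((q : ℝ) ^ 2) (fun ω ↦ g ω ^ 2) m] with ω h h₁ h₂ h₃ h₄
    simp only [Pi.add_apply, Pi.smul_apply, smul_eq_mul, Pi.zero_apply] at h h₁ h₂ h₃ h₄
    linarith
  filter_upwards [ae_all_iff.2 hquad] with ω hω
  exact sq_le_mul_of_forall_rat_nonneg hω

theorem one_sub_ae_eq_condExp_one_sub (hm : m ≤ m₀) [IsFiniteMeasure μ] {D p : Ω → ℝ}
    (hD : Integrable D μ) (hp : p =ᵐ[μ] μ[D|m]) :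
    (fun ω ↦ 1 - p ω) =ᵐ[μ] μ[fun ω ↦ 1 - D ω|m] := by
  filter_upwards [hp, condExp_sub (integrable_const (1 : ℝ)) hD m] with ω hp hsub
  simp only [Pi.sub_apply, condExp_const hm] at hsub
  rw [hp, ← hsub]
  rfl

section BinaryWeight

variable {D Y M : Ω → ℝ}

theorem memLp_of_eq_zero_or_eq_one [IsFiniteMeasure μ] (hD : ∀ ω, D ω = 0 ∨ D ω = 1)
    (hDm : AEStronglyMeasurable D μ) (q : ℝ≥0∞) : MemLp D q μ :=
  MemLp.of_bound hDm 1 (ae_of_all _ fun ω ↦ by rcases hD ω with h | h <;> simp [h])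

theorem integrable_sq_mul_of_mul_ae_eq_condExp (hm : m ≤ m₀) [IsFiniteMeasure μ] {p : Ω → ℝ}
    (hD : ∀ ω, D ω = 0 ∨ D ω = 1) (hDm : AEStronglyMeasurable D μ)
    (hDY : MemLp (fun ω ↦ D ω * Y ω) 2 μ) (hM : StronglyMeasurable[m] M)
    (hp : p =ᵐ[μ] μ[D|m]) (hMY : (fun ω ↦ M ω * p ω) =ᵐ[μ] μ[fun ω ↦ D ω * Y ω|m]) :
    Integrable (fun ω ↦ M ω ^ 2 * D ω) μ := by
  have hD₀ : 0 ≤ᵐ[μ] D := ae_of_all _ fun ω ↦ by rcases hD ω with h | h <;> simp [h]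
  have hcs := condExp_mul_sq_le (m := m) hDY (memLp_of_eq_zero_or_eq_one hD hDm 2)
  have hDYD : (fun ω ↦ D ω * Y ω * D ω) = fun ω ↦ D ω * Y ω :=
    funext fun ω ↦ by rcases hD ω with h | h <;> simp [h]
  have hDD : (fun ω ↦ D ω ^ 2) = D := funext fun ω ↦ by rcases hD ω with h | h <;> simp [h]
  rw [hDYD, hDD] at hcs
  refine integrable_mul_of_integrable_mul_condExp hm
    (memLp_one_iff_integrable.1 (memLp_of_eq_zero_or_eq_one hD hDm 1)) hD₀ (hM.pow 2) ?_
  refine (integrable_condExp (m := m) (f := fun ω ↦ (D ω * Y ω) ^ 2)).mono'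
    (((hM.pow 2).mono hm).aestronglyMeasurable.mul
      (stronglyMeasurable_condExp.mono hm).aestronglyMeasurable) ?_
  filter_upwards [hcs, hp, hMY, condExp_nonneg (m := m) hD₀,
    condExp_nonneg (m := m) (ae_of_all μ fun ω ↦ sq_nonneg (D ω * Y ω))]
    with ω hcs hp hMY hp₀ hE₀
  rw [← hp, ← hMY] at hcs
  rw [← hp] at hp₀ ⊢
  rw [Real.norm_of_nonneg (mul_nonneg (sq_nonneg _) hp₀)]
  rcases hp₀.eq_or_lt with hp₀ | hp₀
  · simpa [← hp₀] using hE₀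
  · exact le_of_mul_le_mul_right (by nlinarith) hp₀

theorem integrable_mul_sub_sq_of_memLp (hD : ∀ ω, D ω = 0 ∨ D ω = 1)
    (hDm : AEStronglyMeasurable D μ) (hDY : MemLp (fun ω ↦ D ω * Y ω) 2 μ)
    (hM : AEStronglyMeasurable M μ) (hMD : Integrable (fun ω ↦ M ω ^ 2 * D ω) μ) :
    Integrable (fun ω ↦ D ω * (Y ω - M ω) ^ 2) μ := by
  have hmeas : AEStronglyMeasurable (fun ω ↦ (D ω * Y ω - M ω * D ω) ^ 2) μ :=
    (hDY.1.sub (hM.mul hDm)).pow 2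
  refine ((hDY.integrable_sq.const_mul 2).add (hMD.const_mul 2)).mono'
    (hmeas.congr (ae_of_all _ fun ω ↦ by rcases hD ω with h | h <;> simp [h])) ?_
  refine ae_of_all _ fun ω ↦ ?_
  rcases hD ω with h | h
  · simp [h]
  · simp only [h, Pi.add_apply, one_mul, mul_one, Real.norm_of_nonneg (sq_nonneg _)]
    nlinarith [sq_nonneg (Y ω + M ω)]

theorem integrable_mul_sub_of_integrable_mul_sub_sq [IsFiniteMeasure μ]
    (hD : ∀ ω, D ω = 0 ∨ D ω = 1) (hDm : AEStronglyMeasurable D μ)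
    (hDY : AEStronglyMeasurable (fun ω ↦ D ω * Y ω) μ) (hM : AEStronglyMeasurable M μ)
    (hYM : Integrable (fun ω ↦ D ω * (Y ω - M ω) ^ 2) μ) :
    Integrable (fun ω ↦ D ω * (Y ω - M ω)) μ := by
  have hsq : Integrable (fun ω ↦ (D ω * Y ω - M ω * D ω) ^ 2) μ :=
    hYM.congr (ae_of_all _ fun ω ↦ by rcases hD ω with h | h <;> simp [h])
  exact ((memLp_two_iff_integrable_sq (hDY.sub (hM.mul hDm))).2 hsq).integrable one_le_two
    |>.congr (ae_of_all _ fun ω ↦ by simp only [Pi.sub_apply, Pi.mul_apply]; ring)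

theorem condExp_mul_sub_ae_eq_zero {p : Ω → ℝ} (hM : StronglyMeasurable[m] M)
    (hD : Integrable D μ) (hDY : Integrable (fun ω ↦ D ω * Y ω) μ) (hMD : Integrable (M * D) μ)
    (hp : p =ᵐ[μ] μ[D|m]) (hMY : (fun ω ↦ M ω * p ω) =ᵐ[μ] μ[fun ω ↦ D ω * Y ω|m]) :
    μ[fun ω ↦ D ω * (Y ω - M ω)|m] =ᵐ[μ] 0 := by
  have hsplit : (fun ω ↦ D ω * (Y ω - M ω)) = (fun ω ↦ D ω * Y ω) - M * D := by
    funext ω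
    simp only [Pi.sub_apply, Pi.mul_apply]
    ring
  rw [hsplit]
  filter_upwards [condExp_sub hDY hMD m, condExp_mul_of_stronglyMeasurable_left hM hMD hD, hp,
    hMY] with ω hsub hpull hp hMY
  simp only [Pi.sub_apply, Pi.mul_apply, Pi.zero_apply] at hsub hpull hMY ⊢
  rw [hsub, hpull, ← hMY, hp, sub_self]

theorem condExp_mul_sub_sq_ae_eq (hm : m ≤ m₀) [IsFiniteMeasure μ] {B p : Ω → ℝ}
    (hD : ∀ ω, D ω = 0 ∨ D ω = 1) (hDm : AEStronglyMeasurable D μ)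
    (hDY : MemLp (fun ω ↦ D ω * Y ω) 2 μ) (hM : StronglyMeasurable[m] M)
    (hB : StronglyMeasurable[m] B) (hp : p =ᵐ[μ] μ[D|m])
    (hMY : (fun ω ↦ M ω * p ω) =ᵐ[μ] μ[fun ω ↦ D ω * Y ω|m])
    (hYB : Integrable (fun ω ↦ D ω * (Y ω - B ω) ^ 2) μ) :
    μ[fun ω ↦ D ω * (Y ω - B ω) ^ 2|m]
      =ᵐ[μ] fun ω ↦ μ[fun ω ↦ D ω * (Y ω - M ω) ^ 2|m] ω + (M ω - B ω) ^ 2 * p ω := by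
  have hMm : AEStronglyMeasurable M μ := (hM.mono hm).aestronglyMeasurable
  have hBm : AEStronglyMeasurable B μ := (hB.mono hm).aestronglyMeasurable
  have hDi : Integrable D μ := memLp_one_iff_integrable.1 (memLp_of_eq_zero_or_eq_one hD hDm 1)
  have hYM : Integrable (fun ω ↦ D ω * (Y ω - M ω) ^ 2) μ :=
    integrable_mul_sub_sq_of_memLp hD hDm hDY hMm
      (integrable_sq_mul_of_mul_ae_eq_condExp hm hD hDm hDY hM hp hMY)
  have hres := integrable_mul_sub_of_integrable_mul_sub_sq hD hDm hDY.1 hMm hYM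
  have hMD : Integrable (M * D) μ := (hDY.integrable one_le_two).sub hres
    |>.congr (ae_of_all _ fun ω ↦ by simp only [Pi.sub_apply, Pi.mul_apply]; ring)
  have hbias : Integrable ((fun ω ↦ (M ω - B ω) ^ 2) * D) μ := by
    refine ((hYB.const_mul 2).add (hYM.const_mul 2)).mono' (((hMm.sub hBm).pow 2).mul hDm) ?_
    refine ae_of_all _ fun ω ↦ ?_
    rcases hD ω with h | h
    · simp [h]
    · simp only [h, Pi.mul_apply, Pi.add_apply, one_mul, mul_one,
        Real.norm_of_nonneg (sq_nonneg _)]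
      nlinarith [sq_nonneg ((Y ω - B ω) + (Y ω - M ω))]
  have hdecomp : (fun ω ↦ D ω * (Y ω - B ω) ^ 2) = (fun ω ↦ D ω * (Y ω - M ω) ^ 2)
      + (fun ω ↦ 2 * (M ω - B ω)) * (fun ω ↦ D ω * (Y ω - M ω))
      + (fun ω ↦ (M ω - B ω) ^ 2) * D := by
    funext ω
    simp only [Pi.add_apply, Pi.mul_apply]
    ring
  have hcross : Integrable ((fun ω ↦ 2 * (M ω - B ω)) * (fun ω ↦ D ω * (Y ω - M ω))) μ := by
    refine ((hYB.sub hYM).sub hbias).congr (ae_of_all _ fun ω ↦ ?_)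
    simp only [Pi.sub_apply, Pi.mul_apply]
    ring
  rw [hdecomp]
  filter_upwards [condExp_add (hYM.add hcross) hbias m, condExp_add hYM hcross m,
    condExp_mul_of_stronglyMeasurable_left (f := fun ω ↦ 2 * (M ω - B ω))
      ((hM.sub hB).const_mul 2) hcross hres,
    condExp_mul_of_stronglyMeasurable_left (f := fun ω ↦ (M ω - B ω) ^ 2) ((hM.sub hB).pow 2)
      hbias hDi,
    condExp_mul_sub_ae_eq_zero hM hDi (hDY.integrable one_le_two) hMD hp hMY, hp]
    with ω h₁ h₂ hcross hbias hzero hp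
  simp only [Pi.add_apply, Pi.mul_apply, Pi.zero_apply] at h₁ h₂ hcross hbias hzero ⊢
  rw [h₁, h₂, hcross, hbias, hzero, hp]
  ring

theorem condExp_sq_mul_add_one_sub_mul_ae_eq (hm : m ≤ m₀) [IsFiniteMeasure μ]
    {M₀ B c₀ p : Ω → ℝ} {c₁ : ℝ} (hc₁ : c₁ ≠ 0) (hD : ∀ ω, D ω = 0 ∨ D ω = 1)
    (hDm : AEStronglyMeasurable D μ) (hDY : MemLp (fun ω ↦ D ω * Y ω) 2 μ)
    (hDcY : MemLp (fun ω ↦ (1 - D ω) * Y ω) 2 μ) (hM : StronglyMeasurable[m] M)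
    (hM₀ : StronglyMeasurable[m] M₀) (hB : StronglyMeasurable[m] B)
    (hc₀ : StronglyMeasurable[m] c₀) (hp : p =ᵐ[μ] μ[D|m])
    (hMY : (fun ω ↦ M ω * p ω) =ᵐ[μ] μ[fun ω ↦ D ω * Y ω|m])
    (hM₀Y : (fun ω ↦ M₀ ω * (1 - p ω)) =ᵐ[μ] μ[fun ω ↦ (1 - D ω) * Y ω|m])
    (hint : Integrable
      (fun ω ↦ (D ω * (c₁ * (Y ω - B ω)) + (1 - D ω) * (c₀ ω * (Y ω - M₀ ω))) ^ 2) μ) :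
    μ[fun ω ↦ (D ω * (c₁ * (Y ω - B ω)) + (1 - D ω) * (c₀ ω * (Y ω - M₀ ω))) ^ 2|m]
      =ᵐ[μ] fun ω ↦ c₁ ^ 2 * (μ[fun ω ↦ D ω * (Y ω - M ω) ^ 2|m] ω + (M ω - B ω) ^ 2 * p ω)
        + c₀ ω ^ 2 * μ[fun ω ↦ (1 - D ω) * (Y ω - M₀ ω) ^ 2|m] ω := by
  have hDc : ∀ ω, 1 - D ω = 0 ∨ 1 - D ω = 1 := fun ω ↦ by rcases hD ω with h | h <;> simp [h]
  have hDcm : AEStronglyMeasurable (fun ω ↦ 1 - D ω) μ := aestronglyMeasurable_const.sub hDm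
  have hD₀ : ∀ ω, 0 ≤ D ω := fun ω ↦ by rcases hD ω with h | h <;> simp [h]
  have hDc₀ : ∀ ω, 0 ≤ 1 - D ω := fun ω ↦ by rcases hD ω with h | h <;> simp [h]
  have hDi : Integrable D μ := memLp_one_iff_integrable.1 (memLp_of_eq_zero_or_eq_one hD hDm 1)
  have hsplit : (fun ω ↦ (D ω * (c₁ * (Y ω - B ω)) + (1 - D ω) * (c₀ ω * (Y ω - M₀ ω))) ^ 2)
      = fun ω ↦ c₁ ^ 2 * (D ω * (Y ω - B ω) ^ 2) + c₀ ω ^ 2 * ((1 - D ω) * (Y ω - M₀ ω) ^ 2) :=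
    funext fun ω ↦ by rcases hD ω with h | h <;> rw [h] <;> ring
  have htreated_meas : AEStronglyMeasurable (fun ω ↦ c₁ ^ 2 * (D ω * (Y ω - B ω) ^ 2)) μ :=
    (hDm.mul hint.1).congr <| ae_of_all _ fun ω ↦ by
      simp only [Pi.mul_apply]
      rcases hD ω with h | h <;> rw [h] <;> ring
  rw [hsplit] at hint ⊢
  obtain ⟨htreated, hcontrol⟩ := (integrable_add_iff_of_nonneg htreated_meas
    (g := fun ω ↦ c₀ ω ^ 2 * ((1 - D ω) * (Y ω - M₀ ω) ^ 2))
    (ae_of_all _ fun ω ↦ mul_nonneg (sq_nonneg _) (mul_nonneg (hD₀ ω) (sq_nonneg _)))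
    (ae_of_all _ fun ω ↦ mul_nonneg (sq_nonneg _) (mul_nonneg (hDc₀ ω) (sq_nonneg _)))).1 hint
  have hYB : Integrable (fun ω ↦ D ω * (Y ω - B ω) ^ 2) μ :=
    (htreated.const_mul (c₁ ^ 2)⁻¹).congr (ae_of_all _ fun ω ↦ by field_simp)
  have hYM₀ : Integrable (fun ω ↦ (1 - D ω) * (Y ω - M₀ ω) ^ 2) μ :=
    integrable_mul_sub_sq_of_memLp hDc hDcm hDcY (hM₀.mono hm).aestronglyMeasurable
      (integrable_sq_mul_of_mul_ae_eq_condExp hm hDc hDcm hDcY hM₀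
        (one_sub_ae_eq_condExp_one_sub hm hDi hp) hM₀Y)
  refine (condExp_add htreated hcontrol m).trans ?_
  filter_upwards [condExp_mul_of_stronglyMeasurable_left (m := m) (f := fun _ ↦ c₁ ^ 2)
      stronglyMeasurable_const htreated hYB,
    condExp_mul_sub_sq_ae_eq hm hD hDm hDY hM hB hp hMY hYB,
    condExp_mul_of_stronglyMeasurable_left (f := fun ω ↦ c₀ ω ^ 2) (hc₀.pow 2) hcontrol
      hYM₀] with ω h₁ hbias h₀
  simp only [Pi.mul_def] at h₁ h₀
  rw [Pi.add_apply, h₁, hbias, h₀]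

end BinaryWeight

end ConditionalExpectation

theorem semiparametric_bound_att_general
    {Ω : Type*} [F : MeasurableSpace Ω] (P : Measure Ω) [IsProbabilityMeasure P]
    (Z Y1 Y0 Y : Ω → ℝ)
    (hZmeas : Measurable Z) (hZ01 : ∀ ω, Z ω = 0 ∨ Z ω = 1)
    (hY1int : Integrable Y1 P) (hY0int : Integrable Y0 P)
    (hYdef : ∀ ω, Y ω = Z ω * Y1 ω + (1 - Z ω) * Y0 ω)
    (mX : MeasurableSpace Ω) (hmX : mX ≤ F)
    (eX : Ω → ℝ) (heXmeas : Measurable[mX] eX) (heX : eX =ᵐ[P] P[Z|mX])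
    (hov : ∀ᵐ ω ∂P, 0 < eX ω ∧ eX ω < 1)
    (mu0 : Ω → ℝ) (hmu0meas : Measurable[mX] mu0)
    (hmu0 : (fun ω => mu0 ω * (1 - eX ω)) =ᵐ[P] P[fun ω => (1 - Z ω) * Y ω|mX])
    (eps0 : Ω → ℝ) (heps0meas : Measurable[mX] eps0)
    (mu1 : Ω → ℝ) (hmu1meas : Measurable[mX] mu1)
    (hmu1 : (fun ω => mu1 ω * eX ω) =ᵐ[P] P[fun ω => Z ω * Y ω|mX])
    (he : 0 < P {ω | Z ω = 1})
    (e tauT : ℝ) (he_def : e = (P {ω | Z ω = 1}).toReal)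
    (hsqZ : Integrable (fun ω => (Z ω * Y ω) ^ 2) P)
    (hsq1mZ : Integrable (fun ω => ((1 - Z ω) * Y ω) ^ 2) P)
    (v1 v0 : Ω → ℝ)
    (hv1 : (fun ω => v1 ω * eX ω)
        =ᵐ[P] P[fun ω => Z ω * (Y ω - mu1 ω) ^ 2|mX])
    (hv0 : (fun ω => v0 ω * (1 - eX ω))
        =ᵐ[P] P[fun ω => (1 - Z ω) * (Y ω - mu0 ω) ^ 2|mX])
    (hintphi : Integrable (fun ω =>
      (Z ω * (Y ω - eps0 ω * mu0 ω - tauT) / e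
        + eps0 ω * eX ω * ((1 - Z ω) * (Y ω - mu0 ω)) / (e * (1 - eX ω))) ^ 2) P)
    (hintv : Integrable (fun ω =>
      eX ω * v1 ω / e ^ 2
        + eX ω ^ 2 * eps0 ω ^ 2 * v0 ω / (e ^ 2 * (1 - eX ω))) P)
    (hintm : Integrable (fun ω =>
      eX ω * (mu1 ω - eps0 ω * mu0 ω - tauT) ^ 2 / e ^ 2) P) :
    ∫ ω, (Z ω * (Y ω - eps0 ω * mu0 ω - tauT) / e
        + eps0 ω * eX ω * ((1 - Z ω) * (Y ω - mu0 ω)) / (e * (1 - eX ω))) ^ 2 ∂P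
      = ∫ ω, (eX ω * v1 ω / e ^ 2
            + eX ω ^ 2 * eps0 ω ^ 2 * v0 ω / (e ^ 2 * (1 - eX ω))) ∂P
        + ∫ ω, eX ω * (mu1 ω - eps0 ω * mu0 ω - tauT) ^ 2 / e ^ 2 ∂P := by
  have he₀ : e ≠ 0 := he_def ▸ (ENNReal.toReal_pos he.ne' (measure_ne_top _ _)).ne'
  have hZ : AEStronglyMeasurable[F] Z P := hZmeas.aestronglyMeasurable
  have hY : AEStronglyMeasurable[F] Y P :=
    funext hYdef ▸ (hZ.mul hY1int.1).add ((aestronglyMeasurable_const.sub hZ).mul hY0int.1)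
  have hφ : ∀ ω, (Z ω * (Y ω - eps0 ω * mu0 ω - tauT) / e
        + eps0 ω * eX ω * ((1 - Z ω) * (Y ω - mu0 ω)) / (e * (1 - eX ω))) ^ 2
      = (Z ω * (e⁻¹ * (Y ω - (eps0 ω * mu0 ω + tauT)))
        + (1 - Z ω) * (eps0 ω * eX ω / (e * (1 - eX ω)) * (Y ω - mu0 ω))) ^ 2 := fun ω ↦ by ring
  have hcond := condExp_sq_mul_add_one_sub_mul_ae_eq (B := fun ω ↦ eps0 ω * mu0 ω + tauT)
    (c₀ := fun ω ↦ eps0 ω * eX ω / (e * (1 - eX ω))) hmX (inv_ne_zero he₀) hZ01 hZ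
    ((memLp_two_iff_integrable_sq (hZ.mul hY)).2 hsqZ)
    ((memLp_two_iff_integrable_sq ((aestronglyMeasurable_const.sub hZ).mul hY)).2 hsq1mZ)
    hmu1meas.stronglyMeasurable hmu0meas.stronglyMeasurable
    ((heps0meas.mul hmu0meas).add_const tauT).stronglyMeasurable
    ((heps0meas.mul heXmeas).div
      (measurable_const.mul (measurable_const.sub heXmeas))).stronglyMeasurable
    heX hmu1 hmu0 (hintphi.congr (ae_of_all _ hφ))
  rw [← integral_add hintv hintm, ← integral_condExp hmX]
  refine integral_congr_ae ((condExp_congr_ae (ae_of_all _ hφ)).trans (hcond.trans ?_))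
  filter_upwards [hv1, hv0, hov] with ω hv1 hv0 hov
  have h1eX : 1 - eX ω ≠ 0 := by linarith [hov.2]
  rw [← hv1, ← hv0]
  field_simp
  ring

/-- Proposition S2 (semiparametric efficiency bound for the average causal effect
on the treated: second-moment formula). -/
theorem semiparametric_bound_att
    {Ω : Type*} [F : MeasurableSpace Ω] (P : Measure Ω) [IsProbabilityMeasure P]
    (Z Y1 Y0 Y : Ω → ℝ)
    (hZmeas : Measurable Z) (hZ01 : ∀ ω, Z ω = 0 ∨ Z ω = 1)
    (hY1int : Integrable Y1 P) (hY0int : Integrable Y0 P)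
    (hYdef : ∀ ω, Y ω = Z ω * Y1 ω + (1 - Z ω) * Y0 ω)
    (mX : MeasurableSpace Ω) (hmX : mX ≤ F)
    (eX : Ω → ℝ) (heXmeas : Measurable[mX] eX) (heX : eX =ᵐ[P] P[Z|mX])
    (hov : ∀ᵐ ω ∂P, 0 < eX ω ∧ eX ω < 1)
    (mu0 : Ω → ℝ) (hmu0meas : Measurable[mX] mu0)
    (hmu0 : (fun ω => mu0 ω * (1 - eX ω)) =ᵐ[P] P[fun ω => (1 - Z ω) * Y ω|mX])
    (eps0 : Ω → ℝ) (heps0meas : Measurable[mX] eps0)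
    (heps0pos : ∀ᵐ ω ∂P, 0 < eps0 ω)
    (hsens0 : ∀ᵐ ω ∂P, (1 - eX ω) * (P[fun ω' => Z ω' * Y0 ω'|mX]) ω
        = eps0 ω * eX ω * (P[fun ω' => (1 - Z ω') * Y0 ω'|mX]) ω)
    (mu1 : Ω → ℝ) (hmu1meas : Measurable[mX] mu1)
    (hmu1 : (fun ω => mu1 ω * eX ω) =ᵐ[P] P[fun ω => Z ω * Y ω|mX])
    (he : 0 < P {ω | Z ω = 1})
    (e tauT : ℝ) (he_def : e = (P {ω | Z ω = 1}).toReal)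
    (htauT : tauT = ∫ ω, (Y1 ω - Y0 ω) ∂(ProbabilityTheory.cond P {ω | Z ω = 1}))
    (hsqZ : Integrable (fun ω => (Z ω * Y ω) ^ 2) P)
    (hsq1mZ : Integrable (fun ω => ((1 - Z ω) * Y ω) ^ 2) P)
    (v1 v0 : Ω → ℝ) (hv1meas : Measurable[mX] v1) (hv0meas : Measurable[mX] v0)
    (hv1 : (fun ω => v1 ω * eX ω)
        =ᵐ[P] P[fun ω => Z ω * (Y ω - mu1 ω) ^ 2|mX])
    (hv0 : (fun ω => v0 ω * (1 - eX ω))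
        =ᵐ[P] P[fun ω => (1 - Z ω) * (Y ω - mu0 ω) ^ 2|mX])
    (hintphi : Integrable (fun ω =>
      (Z ω * (Y ω - eps0 ω * mu0 ω - tauT) / e
        + eps0 ω * eX ω * ((1 - Z ω) * (Y ω - mu0 ω)) / (e * (1 - eX ω))) ^ 2) P)
    (hintv : Integrable (fun ω =>
      eX ω * v1 ω / e ^ 2
        + eX ω ^ 2 * eps0 ω ^ 2 * v0 ω / (e ^ 2 * (1 - eX ω))) P)
    (hintm : Integrable (fun ω =>
      eX ω * (mu1 ω - eps0 ω * mu0 ω - tauT) ^ 2 / e ^ 2) P) :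
    ∫ ω, (Z ω * (Y ω - eps0 ω * mu0 ω - tauT) / e
        + eps0 ω * eX ω * ((1 - Z ω) * (Y ω - mu0 ω)) / (e * (1 - eX ω))) ^ 2 ∂P
      = ∫ ω, (eX ω * v1 ω / e ^ 2
            + eX ω ^ 2 * eps0 ω ^ 2 * v0 ω / (e ^ 2 * (1 - eX ω))) ∂P
        + ∫ ω, eX ω * (mu1 ω - eps0 ω * mu0 ω - tauT) ^ 2 / e ^ 2 ∂P :=
  semiparametric_bound_att_general (F := F) P Z Y1 Y0 Y hZmeas hZ01 hY1int hY0int hYdef mX hmX eX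
    heXmeas heX hov mu0 hmu0meas hmu0 eps0 heps0meas mu1 hmu1meas hmu1 he e tauT he_def hsqZ hsq1mZ
    v1 v0 hv1 hv0 hintphi hintv hintm
end

section
/- (Identification with a multi-valued treatment, Section S1.3.) For each treatment level k ∈ {1,…,K}, the mean potential outcome is identified by three equal formulas: E[Y(k)] = Σ_{l=1}^{K} E[ 1(Z=l)·μ_k(X)/ε_{k,l}(X) ] = Σ_{l=1}^{K} E[ (e_l(X)/ε_{k,l}(X))·1(Z=k)·Y/e_k(X) ] = Σ_{l=1}^{K} E[ 1(Z=l)·μ_k(X)/ε_{k,l}(X) + (e_l(X)/ε_{k,l}(X))·1(Z=k)·(Y−μ_k(X))/e_k(X) ]. -/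
open MeasureTheory

/-!
Fix levels `k, l`. The sensitivity relation, combined with `μₖ eₖ = E[1(Z=k) Y(k) | X]`, gives
`E[1(Z=l) Y(k) | X] = eₗ μₖ / εₖₗ`, so the stratum `E[1(Z=l) Y(k)]` equals `E[eₗ μₖ / εₖₗ]`.
Each of the three summands has that same expectation: conditioning on `X` and pulling out the
`X`-measurable weight replaces `1(Z=l)` by `eₗ` and `1(Z=k) Y` by `μₖ eₖ`. The augmented summand
is the sum of the first two minus `eₗ μₖ / (εₖₗ eₖ) · 1(Z=k)`, whose expectation is once more
`E[eₗ μₖ / εₖₗ]`. Summing the strata over `l` gives `E[Y(k)]`.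
-/

section PullOut

variable {Ω : Type*} {m m₀ : MeasurableSpace Ω} {μ : Measure Ω}

theorem integral_mul_eq_integral_mul_of_ae_eq_condExp (hm : m ≤ m₀) [SigmaFinite (μ.trim hm)]
    {f g e : Ω → ℝ} (hg : StronglyMeasurable[m] g) (hgf : Integrable (g * f) μ)
    (hf : Integrable f μ) (he : e =ᵐ[μ] μ[f|m]) :
    ∫ ω, g ω * f ω ∂μ = ∫ ω, g ω * e ω ∂μ :=
  calc ∫ ω, g ω * f ω ∂μ = ∫ ω, μ[g * f|m] ω ∂μ := (integral_condExp hm).symm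
    _ = ∫ ω, g ω * e ω ∂μ := integral_congr_ae <|
      (condExp_mul_of_stronglyMeasurable_left hg hgf hf).trans <| he.mono fun ω h => by
        simp [h]

end PullOut

section Indicator

variable {Ω α : Type*} {mΩ : MeasurableSpace Ω} [MeasurableSpace α] [MeasurableSingletonClass α]
  [DecidableEq α] {μ : Measure Ω} {Z : Ω → α}

theorem integrable_ite_mul (hZ : Measurable Z) (a : α) {f : Ω → ℝ} (hf : Integrable f μ) :
    Integrable (fun ω => (if Z ω = a then (1 : ℝ) else 0) * f ω) μ :=
  (hf.indicator (hZ (measurableSet_singleton a))).congr <| ae_of_all _ fun ω => by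
    by_cases h : Z ω = a <;> simp [h]

theorem integrable_ite_one_zero [IsFiniteMeasure μ] (hZ : Measurable Z) (a : α) :
    Integrable (fun ω => if Z ω = a then (1 : ℝ) else 0) μ := by
  simpa using integrable_ite_mul (μ := μ) hZ a (integrable_const 1)

theorem integral_eq_sum_integral_ite_mul (hZ : Measurable Z) {s : Finset α}
    (hZs : ∀ ω, Z ω ∈ s) {f : Ω → ℝ} (hf : Integrable f μ) :
    ∫ ω, f ω ∂μ = ∑ a ∈ s, ∫ ω, (if Z ω = a then (1 : ℝ) else 0) * f ω ∂μ := by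
  rw [← integral_finsetSum s fun a _ => integrable_ite_mul hZ a hf]
  congr 1 with ω
  rw [← Finset.sum_mul, Finset.sum_ite_eq, if_pos (hZs ω), one_mul]

end Indicator

section Identification

variable {Ω α : Type*} {m m₀ : MeasurableSpace Ω} [DecidableEq α] {P : Measure Ω} {Z : Ω → α}
  {k l : α} {Yk Y eₖ eₗ μₖ ε : Ω → ℝ}

theorem condExp_ite_mul_eq_of_sensitivity
    (hμₖ : (fun ω => μₖ ω * eₖ ω)
      =ᵐ[P] P[fun ω => (if Z ω = k then (1 : ℝ) else 0) * Yk ω|m])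
    (heₖ_pos : ∀ᵐ ω ∂P, 0 < eₖ ω) (hε_pos : ∀ᵐ ω ∂P, 0 < ε ω)
    (hsens : ∀ᵐ ω ∂P, eₗ ω * P[fun ω' => (if Z ω' = k then (1 : ℝ) else 0) * Yk ω'|m] ω
      = ε ω * eₖ ω * P[fun ω' => (if Z ω' = l then (1 : ℝ) else 0) * Yk ω'|m] ω) :
    P[fun ω => (if Z ω = l then (1 : ℝ) else 0) * Yk ω|m] =ᵐ[P] fun ω => eₗ ω * μₖ ω / ε ω := by
  filter_upwards [hsens, hμₖ, heₖ_pos, hε_pos] with ω hsens hμₖ heₖ_pos hε_pos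
  rw [← hμₖ] at hsens
  rw [eq_div_iff hε_pos.ne']
  apply mul_right_cancel₀ heₖ_pos.ne'
  linear_combination -hsens

variable [IsFiniteMeasure P]

theorem integral_outcome_regression_eq [MeasurableSpace α] [MeasurableSingletonClass α]
    (hm : m ≤ m₀) (hZ : Measurable Z) (hμₖ_meas : Measurable[m] μₖ) (hε_meas : Measurable[m] ε)
    (heₗ : eₗ =ᵐ[P] P[fun ω => if Z ω = l then (1 : ℝ) else 0|m])
    (hint : Integrable (fun ω => (if Z ω = l then (1 : ℝ) else 0) * μₖ ω / ε ω) P) :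
    ∫ ω, (if Z ω = l then (1 : ℝ) else 0) * μₖ ω / ε ω ∂P = ∫ ω, eₗ ω * μₖ ω / ε ω ∂P := by
  have hint' : Integrable ((fun ω => μₖ ω / ε ω) * fun ω => if Z ω = l then (1 : ℝ) else 0) P :=
    hint.congr <| ae_of_all _ fun ω => by simp only [Pi.mul_apply]; ring
  calc ∫ ω, (if Z ω = l then (1 : ℝ) else 0) * μₖ ω / ε ω ∂P
      = ∫ ω, μₖ ω / ε ω * (if Z ω = l then (1 : ℝ) else 0) ∂P := by
        congr 1 with ω; ring
    _ = ∫ ω, μₖ ω / ε ω * eₗ ω ∂P :=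
        integral_mul_eq_integral_mul_of_ae_eq_condExp hm (g := fun ω => μₖ ω / ε ω)
          (hμₖ_meas.div hε_meas).stronglyMeasurable hint' (integrable_ite_one_zero hZ l) heₗ
    _ = ∫ ω, eₗ ω * μₖ ω / ε ω ∂P := by
        congr 1 with ω; ring

theorem integral_inverse_weighting_eq (hm : m ≤ m₀) (heₖ_meas : Measurable[m] eₖ)
    (heₗ_meas : Measurable[m] eₗ) (hε_meas : Measurable[m] ε) (heₖ_pos : ∀ᵐ ω ∂P, 0 < eₖ ω)
    (hμₖ : (fun ω => μₖ ω * eₖ ω) =ᵐ[P] P[fun ω => (if Z ω = k then (1 : ℝ) else 0) * Y ω|m])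
    (hY : Integrable (fun ω => (if Z ω = k then (1 : ℝ) else 0) * Y ω) P)
    (hint : Integrable
      (fun ω => eₗ ω / ε ω * ((if Z ω = k then (1 : ℝ) else 0) * Y ω) / eₖ ω) P) :
    ∫ ω, eₗ ω / ε ω * ((if Z ω = k then (1 : ℝ) else 0) * Y ω) / eₖ ω ∂P
      = ∫ ω, eₗ ω * μₖ ω / ε ω ∂P := by
  have hint' : Integrable ((fun ω => eₗ ω / ε ω / eₖ ω)
      * fun ω => (if Z ω = k then (1 : ℝ) else 0) * Y ω) P :=
    hint.congr <| ae_of_all _ fun ω => by simp only [Pi.mul_apply]; ring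
  calc ∫ ω, eₗ ω / ε ω * ((if Z ω = k then (1 : ℝ) else 0) * Y ω) / eₖ ω ∂P
      = ∫ ω, eₗ ω / ε ω / eₖ ω * ((if Z ω = k then (1 : ℝ) else 0) * Y ω) ∂P := by
        congr 1 with ω; ring
    _ = ∫ ω, eₗ ω / ε ω / eₖ ω * (μₖ ω * eₖ ω) ∂P :=
        integral_mul_eq_integral_mul_of_ae_eq_condExp hm
          ((heₗ_meas.div hε_meas).div heₖ_meas).stronglyMeasurable hint' hY hμₖ
    _ = ∫ ω, eₗ ω * μₖ ω / ε ω ∂P := integral_congr_ae <| heₖ_pos.mono fun ω h => by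
        field_simp [h.ne']

theorem integral_weight_mul_ite_eq [MeasurableSpace α] [MeasurableSingletonClass α]
    (hm : m ≤ m₀) (hZ : Measurable Z) (heₖ_meas : Measurable[m] eₖ)
    (heₗ_meas : Measurable[m] eₗ) (hμₖ_meas : Measurable[m] μₖ) (hε_meas : Measurable[m] ε)
    (heₖ_pos : ∀ᵐ ω ∂P, 0 < eₖ ω) (heₖ : eₖ =ᵐ[P] P[fun ω => if Z ω = k then (1 : ℝ) else 0|m])
    (hint : Integrable
      (fun ω => eₗ ω * μₖ ω / ε ω / eₖ ω * (if Z ω = k then (1 : ℝ) else 0)) P) :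
    ∫ ω, eₗ ω * μₖ ω / ε ω / eₖ ω * (if Z ω = k then (1 : ℝ) else 0) ∂P
      = ∫ ω, eₗ ω * μₖ ω / ε ω ∂P :=
  calc ∫ ω, eₗ ω * μₖ ω / ε ω / eₖ ω * (if Z ω = k then (1 : ℝ) else 0) ∂P
      = ∫ ω, eₗ ω * μₖ ω / ε ω / eₖ ω * eₖ ω ∂P :=
        integral_mul_eq_integral_mul_of_ae_eq_condExp hm
          (g := fun ω => eₗ ω * μₖ ω / ε ω / eₖ ω)
          (((heₗ_meas.mul hμₖ_meas).div hε_meas).div heₖ_meas).stronglyMeasurable hint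
          (integrable_ite_one_zero hZ k) heₖ
    _ = ∫ ω, eₗ ω * μₖ ω / ε ω ∂P := integral_congr_ae <| heₖ_pos.mono fun ω h => by
        field_simp [h.ne']

theorem integral_augmented_eq [MeasurableSpace α] [MeasurableSingletonClass α]
    (hm : m ≤ m₀) (hZ : Measurable Z) (heₖ_meas : Measurable[m] eₖ)
    (heₗ_meas : Measurable[m] eₗ) (hμₖ_meas : Measurable[m] μₖ) (hε_meas : Measurable[m] ε)
    (heₖ_pos : ∀ᵐ ω ∂P, 0 < eₖ ω) (heₖ : eₖ =ᵐ[P] P[fun ω => if Z ω = k then (1 : ℝ) else 0|m])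
    (hintA : Integrable (fun ω => (if Z ω = l then (1 : ℝ) else 0) * μₖ ω / ε ω) P)
    (hintB : Integrable
      (fun ω => eₗ ω / ε ω * ((if Z ω = k then (1 : ℝ) else 0) * Y ω) / eₖ ω) P)
    (hintC : Integrable (fun ω => (if Z ω = l then (1 : ℝ) else 0) * μₖ ω / ε ω
      + eₗ ω / ε ω * ((if Z ω = k then (1 : ℝ) else 0) * (Y ω - μₖ ω)) / eₖ ω) P)
    (hA : ∫ ω, (if Z ω = l then (1 : ℝ) else 0) * μₖ ω / ε ω ∂P = ∫ ω, eₗ ω * μₖ ω / ε ω ∂P)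
    (hB : ∫ ω, eₗ ω / ε ω * ((if Z ω = k then (1 : ℝ) else 0) * Y ω) / eₖ ω ∂P
      = ∫ ω, eₗ ω * μₖ ω / ε ω ∂P) :
    ∫ ω, ((if Z ω = l then (1 : ℝ) else 0) * μₖ ω / ε ω
      + eₗ ω / ε ω * ((if Z ω = k then (1 : ℝ) else 0) * (Y ω - μₖ ω)) / eₖ ω) ∂P
      = ∫ ω, eₗ ω * μₖ ω / ε ω ∂P := by
  have hintD : Integrable
      (fun ω => eₗ ω * μₖ ω / ε ω / eₖ ω * (if Z ω = k then (1 : ℝ) else 0)) P :=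
    ((hintA.add hintB).sub hintC).congr <| ae_of_all _ fun ω => by
      simp only [Pi.add_apply, Pi.sub_apply]; ring
  calc _ = ∫ ω, ((if Z ω = l then (1 : ℝ) else 0) * μₖ ω / ε ω
          + eₗ ω / ε ω * ((if Z ω = k then (1 : ℝ) else 0) * Y ω) / eₖ ω
          - eₗ ω * μₖ ω / ε ω / eₖ ω * (if Z ω = k then (1 : ℝ) else 0)) ∂P := by
        congr 1 with ω; ring
    _ = ∫ ω, eₗ ω * μₖ ω / ε ω ∂P := by
        rw [integral_sub (f := fun ω => _ + _) (hintA.add hintB) hintD,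
          integral_add hintA hintB, hA, hB, integral_weight_mul_ite_eq hm hZ heₖ_meas heₗ_meas
            hμₖ_meas hε_meas heₖ_pos heₖ hintD, add_sub_cancel_right]

end Identification

theorem multivalued_treatment_identification_general
    {Ω : Type*} [F : MeasurableSpace Ω] (P : Measure Ω) [IsProbabilityMeasure P]
    (K : ℕ) (Z : Ω → ℕ) (hZmeas : Measurable Z)
    (hZrange : ∀ ω, Z ω ∈ Finset.Icc 1 K)
    (Yk : ℕ → Ω → ℝ) (Y : Ω → ℝ)
    (hYkint : ∀ k ∈ Finset.Icc 1 K, Integrable (Yk k) P)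
    (hYdef : ∀ ω, Y ω = Yk (Z ω) ω)
    (mX : MeasurableSpace Ω) (hmX : mX ≤ F)
    (eK : ℕ → Ω → ℝ) (heKmeas : ∀ k ∈ Finset.Icc 1 K, Measurable[mX] (eK k))
    (heK : ∀ k ∈ Finset.Icc 1 K,
      eK k =ᵐ[P] P[fun ω => if Z ω = k then (1 : ℝ) else 0|mX])
    (heKpos : ∀ k ∈ Finset.Icc 1 K, ∀ᵐ ω ∂P, 0 < eK k ω)
    (muK : ℕ → Ω → ℝ) (hmuKmeas : ∀ k ∈ Finset.Icc 1 K, Measurable[mX] (muK k))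
    (hmuK : ∀ k ∈ Finset.Icc 1 K, (fun ω => muK k ω * eK k ω)
        =ᵐ[P] P[fun ω => (if Z ω = k then (1 : ℝ) else 0) * Y ω|mX])
    (eps : ℕ → ℕ → Ω → ℝ)
    (hepsmeas : ∀ k ∈ Finset.Icc 1 K, ∀ l ∈ Finset.Icc 1 K, Measurable[mX] (eps k l))
    (hepspos : ∀ k ∈ Finset.Icc 1 K, ∀ l ∈ Finset.Icc 1 K, ∀ᵐ ω ∂P, 0 < eps k l ω)
    (hsens : ∀ k ∈ Finset.Icc 1 K, ∀ l ∈ Finset.Icc 1 K, ∀ᵐ ω ∂P,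
      eK l ω * (P[fun ω' => (if Z ω' = k then (1 : ℝ) else 0) * Yk k ω'|mX]) ω
        = eps k l ω * eK k ω
          * (P[fun ω' => (if Z ω' = l then (1 : ℝ) else 0) * Yk k ω'|mX]) ω)
    (hint1 : ∀ k ∈ Finset.Icc 1 K, ∀ l ∈ Finset.Icc 1 K,
      Integrable (fun ω => (if Z ω = l then (1 : ℝ) else 0) * muK k ω / eps k l ω) P)
    (hint2 : ∀ k ∈ Finset.Icc 1 K, ∀ l ∈ Finset.Icc 1 K,
      Integrable (fun ω =>
        eK l ω / eps k l ω * ((if Z ω = k then (1 : ℝ) else 0) * Y ω) / eK k ω) P)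
    (hint3 : ∀ k ∈ Finset.Icc 1 K, ∀ l ∈ Finset.Icc 1 K,
      Integrable (fun ω => (if Z ω = l then (1 : ℝ) else 0) * muK k ω / eps k l ω
        + eK l ω / eps k l ω
          * ((if Z ω = k then (1 : ℝ) else 0) * (Y ω - muK k ω)) / eK k ω) P) :
    ∀ k ∈ Finset.Icc 1 K,
      (∫ ω, Yk k ω ∂P = ∑ l ∈ Finset.Icc 1 K,
        ∫ ω, (if Z ω = l then (1 : ℝ) else 0) * muK k ω / eps k l ω ∂P)
      ∧ (∫ ω, Yk k ω ∂P = ∑ l ∈ Finset.Icc 1 K,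
        ∫ ω, eK l ω / eps k l ω * ((if Z ω = k then (1 : ℝ) else 0) * Y ω) / eK k ω ∂P)
      ∧ (∫ ω, Yk k ω ∂P = ∑ l ∈ Finset.Icc 1 K,
        ∫ ω, ((if Z ω = l then (1 : ℝ) else 0) * muK k ω / eps k l ω
          + eK l ω / eps k l ω
            * ((if Z ω = k then (1 : ℝ) else 0) * (Y ω - muK k ω)) / eK k ω) ∂P) := by
  intro k hk
  have hY : (fun ω => (if Z ω = k then (1 : ℝ) else 0) * Y ω)
      = fun ω => (if Z ω = k then (1 : ℝ) else 0) * Yk k ω := by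
    ext ω
    split_ifs with h
    · rw [hYdef, h]
    · simp only [zero_mul]
  have hstratum : ∀ l ∈ Finset.Icc 1 K, ∫ ω, (if Z ω = l then (1 : ℝ) else 0) * Yk k ω ∂P
      = ∫ ω, eK l ω * muK k ω / eps k l ω ∂P := fun l hl =>
    (integral_condExp hmX).symm.trans <| integral_congr_ae <| condExp_ite_mul_eq_of_sensitivity
      (hY ▸ hmuK k hk) (heKpos k hk) (hepspos k hk l hl) (hsens k hk l hl)
  have hA := fun l hl => integral_outcome_regression_eq hmX hZmeas (hmuKmeas k hk)
    (hepsmeas k hk l hl) (heK l hl) (hint1 k hk l hl)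
  have hB := fun l hl => integral_inverse_weighting_eq hmX (heKmeas k hk) (heKmeas l hl)
    (hepsmeas k hk l hl) (heKpos k hk) (hmuK k hk)
    (hY ▸ integrable_ite_mul hZmeas k (hYkint k hk)) (hint2 k hk l hl)
  rw [integral_eq_sum_integral_ite_mul hZmeas hZrange (hYkint k hk)]
  refine ⟨?_, ?_, ?_⟩ <;> refine Finset.sum_congr rfl fun l hl => (hstratum l hl).trans ?_
  · exact (hA l hl).symm
  · exact (hB l hl).symm
  · exact (integral_augmented_eq hmX hZmeas (heKmeas k hk) (heKmeas l hl) (hmuKmeas k hk)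
      (hepsmeas k hk l hl) (heKpos k hk) (heK k hk) (hint1 k hk l hl) (hint2 k hk l hl)
      (hint3 k hk l hl) (hA l hl) (hB l hl)).symm

/-- Identification with a multi-valued treatment (Section S1.3). -/
theorem multivalued_treatment_identification
    {Ω : Type*} [F : MeasurableSpace Ω] (P : Measure Ω) [IsProbabilityMeasure P]
    (K : ℕ) (Z : Ω → ℕ) (hZmeas : Measurable Z)
    (hZrange : ∀ ω, Z ω ∈ Finset.Icc 1 K)
    (Yk : ℕ → Ω → ℝ) (Y : Ω → ℝ)
    (hYkint : ∀ k ∈ Finset.Icc 1 K, Integrable (Yk k) P)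
    (hYdef : ∀ ω, Y ω = Yk (Z ω) ω)
    (mX : MeasurableSpace Ω) (hmX : mX ≤ F)
    (eK : ℕ → Ω → ℝ) (heKmeas : ∀ k ∈ Finset.Icc 1 K, Measurable[mX] (eK k))
    (heK : ∀ k ∈ Finset.Icc 1 K,
      eK k =ᵐ[P] P[fun ω => if Z ω = k then (1 : ℝ) else 0|mX])
    (heKpos : ∀ k ∈ Finset.Icc 1 K, ∀ᵐ ω ∂P, 0 < eK k ω)
    (muK : ℕ → Ω → ℝ) (hmuKmeas : ∀ k ∈ Finset.Icc 1 K, Measurable[mX] (muK k))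
    (hmuK : ∀ k ∈ Finset.Icc 1 K, (fun ω => muK k ω * eK k ω)
        =ᵐ[P] P[fun ω => (if Z ω = k then (1 : ℝ) else 0) * Y ω|mX])
    (eps : ℕ → ℕ → Ω → ℝ)
    (hepsmeas : ∀ k ∈ Finset.Icc 1 K, ∀ l ∈ Finset.Icc 1 K, Measurable[mX] (eps k l))
    (hepspos : ∀ k ∈ Finset.Icc 1 K, ∀ l ∈ Finset.Icc 1 K, ∀ᵐ ω ∂P, 0 < eps k l ω)
    (hepskk : ∀ k ∈ Finset.Icc 1 K, ∀ᵐ ω ∂P, eps k k ω = 1)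
    (hsens : ∀ k ∈ Finset.Icc 1 K, ∀ l ∈ Finset.Icc 1 K, ∀ᵐ ω ∂P,
      eK l ω * (P[fun ω' => (if Z ω' = k then (1 : ℝ) else 0) * Yk k ω'|mX]) ω
        = eps k l ω * eK k ω
          * (P[fun ω' => (if Z ω' = l then (1 : ℝ) else 0) * Yk k ω'|mX]) ω)
    (hint1 : ∀ k ∈ Finset.Icc 1 K, ∀ l ∈ Finset.Icc 1 K,
      Integrable (fun ω => (if Z ω = l then (1 : ℝ) else 0) * muK k ω / eps k l ω) P)
    (hint2 : ∀ k ∈ Finset.Icc 1 K, ∀ l ∈ Finset.Icc 1 K,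
      Integrable (fun ω =>
        eK l ω / eps k l ω * ((if Z ω = k then (1 : ℝ) else 0) * Y ω) / eK k ω) P)
    (hint3 : ∀ k ∈ Finset.Icc 1 K, ∀ l ∈ Finset.Icc 1 K,
      Integrable (fun ω => (if Z ω = l then (1 : ℝ) else 0) * muK k ω / eps k l ω
        + eK l ω / eps k l ω
          * ((if Z ω = k then (1 : ℝ) else 0) * (Y ω - muK k ω)) / eK k ω) P) :
    ∀ k ∈ Finset.Icc 1 K,
      (∫ ω, Yk k ω ∂P = ∑ l ∈ Finset.Icc 1 K,
        ∫ ω, (if Z ω = l then (1 : ℝ) else 0) * muK k ω / eps k l ω ∂P)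
      ∧ (∫ ω, Yk k ω ∂P = ∑ l ∈ Finset.Icc 1 K,
        ∫ ω, eK l ω / eps k l ω * ((if Z ω = k then (1 : ℝ) else 0) * Y ω) / eK k ω ∂P)
      ∧ (∫ ω, Yk k ω ∂P = ∑ l ∈ Finset.Icc 1 K,
        ∫ ω, ((if Z ω = l then (1 : ℝ) else 0) * muK k ω / eps k l ω
          + eK l ω / eps k l ω
            * ((if Z ω = k then (1 : ℝ) else 0) * (Y ω - muK k ω)) / eK k ω) ∂P) :=
  multivalued_treatment_identification_general (F := F) P K Z hZmeas hZrange Yk Y hYkint hYdef mX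
    hmX eK heKmeas heK heKpos muK hmuKmeas hmuK eps hepsmeas hepspos hsens hint1 hint2 hint3
end

section
/- (Identification under sensitivity parameters on the difference scale, Section 6.1.) Under the difference-scale sensitivity parametrization, the mean potential outcomes satisfy the three equal identification formulas: E[Y(1)] = E[μ1(X)] − E[(1−Z)·δ1(X)] = E[Z·Y/e(X) − (1−Z)·δ1(X)] = E[μ1(X) + Z·(Y−μ1(X))/e(X) − (1−Z)·δ1(X)], and E[Y(0)] = E[μ0(X)] + E[Z·δ0(X)] = E[(1−Z)·Y/(1−e(X)) + Z·δ0(X)] = E[μ0(X) + (1−Z)·(Y−μ0(X))/(1−e(X)) + Z·δ0(X)]. -/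
/-!
For an arm with indicator `A`, propensity `e` and outcome mean `μₐ`, the tower property gives
`E[A Yₐ ∣ 𝔛] = μₐ e`, and the sensitivity relation then solves to
`E[(1 - A) Yₐ ∣ 𝔛] = (1 - e)(μₐ - δ)`. Adding and integrating, `E[Yₐ] = E[μₐ] - E[(1 - e) δ]`,
and `E[(1 - e) δ] = E[(1 - A) δ]` because `δ` is `𝔛`-measurable. The weighted terms `A Y / e`
and `A μₐ / e` both have conditional expectation `μₐ`, which gives the weighting and augmented
formulas. The control arm is the same computation for `A = 1 - Z`, with propensity `1 - e` and
sensitivity `-δ₀`.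
-/

open MeasureTheory

section

variable {Ω : Type*} {m mΩ : MeasurableSpace Ω} {μ : Measure Ω}

theorem integral_eq_integral_of_condExp_ae_eq [IsFiniteMeasure μ] (hm : m ≤ mΩ) {f g : Ω → ℝ}
    (h : μ[f|m] =ᵐ[μ] g) : ∫ ω, f ω ∂μ = ∫ ω, g ω ∂μ :=
  (integral_condExp hm).symm.trans (integral_congr_ae h)

theorem condExp_one_sub [IsFiniteMeasure μ] (hm : m ≤ mΩ) {f : Ω → ℝ} (hf : Integrable f μ) :
    μ[fun ω => 1 - f ω|m] =ᵐ[μ] fun ω => 1 - μ[f|m] ω := by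
  filter_upwards [condExp_sub (integrable_const 1) hf m] with ω h
  rw [Pi.sub_apply, condExp_const hm] at h
  exact h

theorem MeasureTheory.Integrable.zero_or_one_mul {A f : Ω → ℝ} (hf : Integrable f μ)
    (hA : Measurable A) (hA01 : ∀ ω, A ω = 0 ∨ A ω = 1) : Integrable (fun ω => A ω * f ω) μ :=
  hf.bdd_mul (c := 1) hA.aestronglyMeasurable
    (ae_of_all _ fun ω => by rcases hA01 ω with h | h <;> simp [h])

theorem condExp_div_ae_eq_of_condExp_ae_eq_mul {f c e : Ω → ℝ} (he : Measurable[m] e)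
    (he0 : ∀ᵐ ω ∂μ, e ω ≠ 0) (hf : Integrable f μ) (hfe : Integrable (fun ω => f ω / e ω) μ)
    (hc : μ[f|m] =ᵐ[μ] fun ω => c ω * e ω) : μ[fun ω => f ω / e ω|m] =ᵐ[μ] c := by
  have hpull : μ[(fun ω => (e ω)⁻¹) * f|m] =ᵐ[μ] (fun ω => (e ω)⁻¹) * μ[f|m] :=
    condExp_mul_of_stronglyMeasurable_left he.inv.stronglyMeasurable
      (hfe.congr (ae_of_all _ fun ω => div_eq_inv_mul _ _)) hf
  have hdiv : (fun ω => f ω / e ω) = (fun ω => (e ω)⁻¹) * f := funext fun ω => div_eq_inv_mul _ _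
  filter_upwards [hpull, hc, he0] with ω hpull hc he0
  rw [hdiv, hpull, Pi.mul_apply, hc]
  field_simp

/-- `e`, `mean` and `δ` are versions of `P(A = 1 ∣ m)`, `E[Y ∣ A = 1, m]` and
`E[Ya ∣ A = 1, m] - E[Ya ∣ A = 0, m]`, each relation cleared of denominators. -/
structure DifferenceScaleArm (μ : Measure Ω) (m : MeasurableSpace Ω) (A Ya Y e mean δ : Ω → ℝ) :
    Prop where
  measurable_indicator : Measurable[mΩ] A
  indicator_eq : ∀ ω, A ω = 0 ∨ A ω = 1
  integrable_potential : Integrable Ya μ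
  mul_observed : ∀ ω, A ω * Y ω = A ω * Ya ω
  measurable_propensity : Measurable[m] e
  propensity_ae_eq : e =ᵐ[μ] μ[A|m]
  propensity_ne_zero : ∀ᵐ ω ∂μ, e ω ≠ 0
  measurable_mean : Measurable[m] mean
  mean_mul_propensity : (fun ω => mean ω * e ω) =ᵐ[μ] μ[fun ω => A ω * Y ω|m]
  measurable_sensitivity : Measurable[m] δ
  sensitivity : ∀ᵐ ω ∂μ, (1 - e ω) * μ[fun ω' => A ω' * Ya ω'|m] ω
      - e ω * μ[fun ω' => (1 - A ω') * Ya ω'|m] ω = δ ω * e ω * (1 - e ω)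

namespace DifferenceScaleArm

variable {A Ya Y e mean δ : Ω → ℝ}

theorem integrable_mul (h : DifferenceScaleArm μ m A Ya Y e mean δ) {f : Ω → ℝ}
    (hf : Integrable f μ) : Integrable (fun ω => A ω * f ω) μ :=
  hf.zero_or_one_mul h.measurable_indicator h.indicator_eq

theorem integrable_one_sub_mul (h : DifferenceScaleArm μ m A Ya Y e mean δ) {f : Ω → ℝ}
    (hf : Integrable f μ) : Integrable (fun ω => (1 - A ω) * f ω) μ :=
  hf.zero_or_one_mul (measurable_const.sub h.measurable_indicator) fun ω => by
    rcases h.indicator_eq ω with h | h <;> simp [h]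

theorem integrable_indicator [IsFiniteMeasure μ] (h : DifferenceScaleArm μ m A Ya Y e mean δ) :
    Integrable A μ := by
  simpa using h.integrable_mul (integrable_const (1 : ℝ))

theorem condExp_mul_potential (h : DifferenceScaleArm μ m A Ya Y e mean δ) :
    μ[fun ω => A ω * Ya ω|m] =ᵐ[μ] fun ω => mean ω * e ω := by
  rw [← funext h.mul_observed]
  exact h.mean_mul_propensity.symm

theorem condExp_one_sub_mul_potential (h : DifferenceScaleArm μ m A Ya Y e mean δ) :
    μ[fun ω => (1 - A ω) * Ya ω|m] =ᵐ[μ] fun ω => (1 - e ω) * (mean ω - δ ω) := by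
  filter_upwards [h.sensitivity, h.condExp_mul_potential, h.propensity_ne_zero]
    with ω hδ hmean he
  rw [hmean] at hδ
  exact mul_left_cancel₀ he (by linear_combination -hδ)

theorem condExp_one_sub_mul_sensitivity [IsFiniteMeasure μ]
    (h : DifferenceScaleArm μ m A Ya Y e mean δ) (hm : m ≤ mΩ)
    (hδ : Integrable (fun ω => (1 - A ω) * δ ω) μ) :
    μ[fun ω => (1 - A ω) * δ ω|m] =ᵐ[μ] fun ω => (1 - e ω) * δ ω := by
  have hA := h.integrable_indicator
  have hpull : μ[δ * fun ω => 1 - A ω|m] =ᵐ[μ] δ * μ[fun ω => 1 - A ω|m] :=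
    condExp_mul_of_stronglyMeasurable_left h.measurable_sensitivity.stronglyMeasurable
      (hδ.congr (ae_of_all _ fun ω => mul_comm _ _)) ((integrable_const 1).sub hA)
  have hcomm : (fun ω => (1 - A ω) * δ ω) = δ * fun ω => 1 - A ω := funext fun ω => mul_comm _ _
  filter_upwards [hpull, condExp_one_sub hm hA, h.propensity_ae_eq] with ω hpull hA he
  rw [hcomm, hpull, Pi.mul_apply, hA, ← he, mul_comm]

theorem integral_potential [IsFiniteMeasure μ] (h : DifferenceScaleArm μ m A Ya Y e mean δ)
    (hm : m ≤ mΩ) (hmean : Integrable mean μ) (hδ : Integrable (fun ω => (1 - A ω) * δ ω) μ) :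
    ∫ ω, Ya ω ∂μ = ∫ ω, mean ω ∂μ - ∫ ω, (1 - A ω) * δ ω ∂μ := by
  have htreated := h.condExp_mul_potential
  have hcontrol := h.condExp_one_sub_mul_potential
  have hsens := h.condExp_one_sub_mul_sensitivity hm hδ
  have hsplit : ∫ ω, Ya ω ∂μ = ∫ ω, A ω * Ya ω ∂μ + ∫ ω, (1 - A ω) * Ya ω ∂μ := by
    rw [← integral_add (h.integrable_mul h.integrable_potential)
      (h.integrable_one_sub_mul h.integrable_potential)]
    exact integral_congr_ae (ae_of_all _ fun ω => by ring)
  rw [hsplit, integral_eq_integral_of_condExp_ae_eq hm htreated,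
    integral_eq_integral_of_condExp_ae_eq hm hcontrol,
    integral_eq_integral_of_condExp_ae_eq hm hsens,
    ← integral_add (integrable_condExp.congr htreated) (integrable_condExp.congr hcontrol),
    ← integral_sub hmean (integrable_condExp.congr hsens)]
  exact integral_congr_ae (ae_of_all _ fun ω => by ring)

theorem integral_mul_observed_div [IsFiniteMeasure μ]
    (h : DifferenceScaleArm μ m A Ya Y e mean δ) (hm : m ≤ mΩ)
    (hweighted : Integrable (fun ω => A ω * Y ω / e ω) μ) :
    ∫ ω, A ω * Y ω / e ω ∂μ = ∫ ω, mean ω ∂μ :=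
  integral_eq_integral_of_condExp_ae_eq hm <|
    condExp_div_ae_eq_of_condExp_ae_eq_mul h.measurable_propensity h.propensity_ne_zero
      ((h.integrable_mul h.integrable_potential).congr
        (ae_of_all _ fun ω => (h.mul_observed ω).symm))
      hweighted h.mean_mul_propensity.symm

theorem integral_potential_eq_ipw [IsFiniteMeasure μ] (h : DifferenceScaleArm μ m A Ya Y e mean δ)
    (hm : m ≤ mΩ) (hmean : Integrable mean μ) (hδ : Integrable (fun ω => (1 - A ω) * δ ω) μ)
    (hipw : Integrable (fun ω => A ω * Y ω / e ω - (1 - A ω) * δ ω) μ) :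
    ∫ ω, Ya ω ∂μ = ∫ ω, (A ω * Y ω / e ω - (1 - A ω) * δ ω) ∂μ := by
  have hweighted : Integrable (fun ω => A ω * Y ω / e ω) μ :=
    (hipw.add hδ).congr (ae_of_all _ fun ω => by simp)
  rw [integral_sub hweighted hδ, h.integral_mul_observed_div hm hweighted,
    h.integral_potential hm hmean hδ]

theorem integral_mul_mean_div [IsFiniteMeasure μ] (h : DifferenceScaleArm μ m A Ya Y e mean δ)
    (hm : m ≤ mΩ) (hmean : Integrable mean μ)
    (hweighted : Integrable (fun ω => A ω * mean ω / e ω) μ) :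
    ∫ ω, A ω * mean ω / e ω ∂μ = ∫ ω, mean ω ∂μ := by
  have hpull : μ[fun ω => A ω * mean ω|m] =ᵐ[μ] fun ω => mean ω * e ω := by
    filter_upwards [condExp_mul_of_stronglyMeasurable_right h.measurable_mean.stronglyMeasurable
      (h.integrable_mul hmean) h.integrable_indicator, h.propensity_ae_eq] with ω hpull he
    exact hpull.trans (by rw [Pi.mul_apply, ← he, mul_comm])
  exact integral_eq_integral_of_condExp_ae_eq hm <|
    condExp_div_ae_eq_of_condExp_ae_eq_mul h.measurable_propensity h.propensity_ne_zero
      (h.integrable_mul hmean) hweighted hpull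

theorem integral_potential_eq_aipw [IsFiniteMeasure μ]
    (h : DifferenceScaleArm μ m A Ya Y e mean δ) (hm : m ≤ mΩ) (hmean : Integrable mean μ)
    (hδ : Integrable (fun ω => (1 - A ω) * δ ω) μ)
    (hipw : Integrable (fun ω => A ω * Y ω / e ω - (1 - A ω) * δ ω) μ)
    (haipw : Integrable (fun ω => mean ω + A ω * (Y ω - mean ω) / e ω - (1 - A ω) * δ ω) μ) :
    ∫ ω, Ya ω ∂μ = ∫ ω, (mean ω + A ω * (Y ω - mean ω) / e ω - (1 - A ω) * δ ω) ∂μ := by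
  have hweighted : Integrable (fun ω => A ω * mean ω / e ω) μ :=
    ((hipw.sub haipw).add hmean).congr (ae_of_all _ fun ω => by
      simp only [Pi.add_apply, Pi.sub_apply]; ring)
  have hsplit : ∫ ω, (mean ω + A ω * (Y ω - mean ω) / e ω - (1 - A ω) * δ ω) ∂μ
      = ∫ ω, (A ω * Y ω / e ω - (1 - A ω) * δ ω) ∂μ
        + (∫ ω, mean ω ∂μ - ∫ ω, A ω * mean ω / e ω ∂μ) := by
    rw [← integral_sub hmean hweighted, ← integral_add hipw (hmean.sub' hweighted)]
    exact integral_congr_ae (ae_of_all _ fun ω => by ring)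
  rw [hsplit, h.integral_mul_mean_div hm hmean hweighted, sub_self, add_zero,
    h.integral_potential_eq_ipw hm hmean hδ hipw]

theorem of_control [IsFiniteMeasure μ] {Z Y₀ : Ω → ℝ} (hm : m ≤ mΩ) (hZ : Measurable Z)
    (hZ01 : ∀ ω, Z ω = 0 ∨ Z ω = 1) (hY₀ : Integrable Y₀ μ)
    (hZY : ∀ ω, (1 - Z ω) * Y ω = (1 - Z ω) * Y₀ ω) (he : Measurable[m] e)
    (heZ : e =ᵐ[μ] μ[Z|m]) (he1 : ∀ᵐ ω ∂μ, e ω ≠ 1) (hmean : Measurable[m] mean)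
    (hmeanZ : (fun ω => mean ω * (1 - e ω)) =ᵐ[μ] μ[fun ω => (1 - Z ω) * Y ω|m])
    (hδ : Measurable[m] δ)
    (hsens : ∀ᵐ ω ∂μ, (1 - e ω) * μ[fun ω' => Z ω' * Y₀ ω'|m] ω
      - e ω * μ[fun ω' => (1 - Z ω') * Y₀ ω'|m] ω = δ ω * e ω * (1 - e ω)) :
    DifferenceScaleArm μ m (fun ω => 1 - Z ω) Y₀ Y (fun ω => 1 - e ω) mean (fun ω => -δ ω) where
  measurable_indicator := measurable_const.sub hZ
  indicator_eq ω := by rcases hZ01 ω with h | h <;> simp [h]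
  integrable_potential := hY₀
  mul_observed := hZY
  measurable_propensity := measurable_const.sub he
  propensity_ae_eq := by
    have hZint : Integrable Z μ := by simpa using (integrable_const (1 : ℝ)).zero_or_one_mul hZ hZ01
    filter_upwards [condExp_one_sub hm hZint, heZ] with ω h he
    rw [h, he]
  propensity_ne_zero := he1.mono fun ω h => sub_ne_zero.mpr h.symm
  measurable_mean := hmean
  mean_mul_propensity := hmeanZ
  measurable_sensitivity := hδ.neg
  sensitivity := by
    filter_upwards [hsens] with ω h
    simp only [sub_sub_cancel]
    linear_combination -h

theorem integral_potential_eq_of_control [IsFiniteMeasure μ] {Z Y₀ : Ω → ℝ}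
    (h : DifferenceScaleArm μ m (fun ω => 1 - Z ω) Y₀ Y (fun ω => 1 - e ω) mean (fun ω => -δ ω))
    (hm : m ≤ mΩ) (hmean : Integrable mean μ) (hδ : Integrable (fun ω => Z ω * δ ω) μ)
    (hipw : Integrable (fun ω => (1 - Z ω) * Y ω / (1 - e ω) + Z ω * δ ω) μ)
    (haipw : Integrable (fun ω => mean ω + (1 - Z ω) * (Y ω - mean ω) / (1 - e ω)
      + Z ω * δ ω) μ) :
    (∫ ω, Y₀ ω ∂μ = ∫ ω, mean ω ∂μ + ∫ ω, Z ω * δ ω ∂μ)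
    ∧ (∫ ω, Y₀ ω ∂μ = ∫ ω, ((1 - Z ω) * Y ω / (1 - e ω) + Z ω * δ ω) ∂μ)
    ∧ (∫ ω, Y₀ ω ∂μ
        = ∫ ω, (mean ω + (1 - Z ω) * (Y ω - mean ω) / (1 - e ω) + Z ω * δ ω) ∂μ) := by
  have hsign (ω : Ω) : (1 - (1 - Z ω)) * -δ ω = -(Z ω * δ ω) := by ring
  have hδ' : Integrable (fun ω => (1 - (1 - Z ω)) * -δ ω) μ := by
    simpa only [hsign] using hδ.fun_neg
  have hipw' : Integrable (fun ω => (1 - Z ω) * Y ω / (1 - e ω) - (1 - (1 - Z ω)) * -δ ω) μ := by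
    simpa only [hsign, sub_neg_eq_add] using hipw
  have haipw' : Integrable (fun ω => mean ω + (1 - Z ω) * (Y ω - mean ω) / (1 - e ω)
      - (1 - (1 - Z ω)) * -δ ω) μ := by
    simpa only [hsign, sub_neg_eq_add] using haipw
  refine ⟨?_, ?_, ?_⟩
  · rw [h.integral_potential hm hmean hδ']
    simp only [hsign, integral_neg, sub_neg_eq_add]
  · rw [h.integral_potential_eq_ipw hm hmean hδ' hipw']
    simp only [hsign, sub_neg_eq_add]
  · rw [h.integral_potential_eq_aipw hm hmean hδ' hipw' haipw']
    simp only [hsign, sub_neg_eq_add]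

end DifferenceScaleArm

end

theorem difference_scale_identification_general
    {Ω : Type*} [F : MeasurableSpace Ω] (P : Measure Ω) [IsProbabilityMeasure P]
    (Z Y1 Y0 Y : Ω → ℝ)
    (hZmeas : Measurable Z) (hZ01 : ∀ ω, Z ω = 0 ∨ Z ω = 1)
    (hY1int : Integrable Y1 P) (hY0int : Integrable Y0 P)
    (hYdef : ∀ ω, Y ω = Z ω * Y1 ω + (1 - Z ω) * Y0 ω)
    (mX : MeasurableSpace Ω) (hmX : mX ≤ F)
    (eX : Ω → ℝ) (heXmeas : Measurable[mX] eX) (heX : eX =ᵐ[P] P[Z|mX])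
    (hov : ∀ᵐ ω ∂P, 0 < eX ω ∧ eX ω < 1)
    (mu1 mu0 : Ω → ℝ) (hmu1meas : Measurable[mX] mu1) (hmu0meas : Measurable[mX] mu0)
    (hmu1 : (fun ω => mu1 ω * eX ω) =ᵐ[P] P[fun ω => Z ω * Y ω|mX])
    (hmu0 : (fun ω => mu0 ω * (1 - eX ω)) =ᵐ[P] P[fun ω => (1 - Z ω) * Y ω|mX])
    (del1 del0 : Ω → ℝ)
    (hdel1meas : Measurable[mX] del1) (hdel0meas : Measurable[mX] del0)
    (hdel1 : ∀ᵐ ω ∂P, (1 - eX ω) * (P[fun ω' => Z ω' * Y1 ω'|mX]) ω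
        - eX ω * (P[fun ω' => (1 - Z ω') * Y1 ω'|mX]) ω
        = del1 ω * eX ω * (1 - eX ω))
    (hdel0 : ∀ᵐ ω ∂P, (1 - eX ω) * (P[fun ω' => Z ω' * Y0 ω'|mX]) ω
        - eX ω * (P[fun ω' => (1 - Z ω') * Y0 ω'|mX]) ω
        = del0 ω * eX ω * (1 - eX ω))
    (hint1a : Integrable mu1 P)
    (hint1b : Integrable (fun ω => (1 - Z ω) * del1 ω) P)
    (hint1c : Integrable (fun ω => Z ω * Y ω / eX ω - (1 - Z ω) * del1 ω) P)
    (hint1d : Integrable (fun ω => mu1 ω + Z ω * (Y ω - mu1 ω) / eX ω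
        - (1 - Z ω) * del1 ω) P)
    (hint0a : Integrable mu0 P)
    (hint0b : Integrable (fun ω => Z ω * del0 ω) P)
    (hint0c : Integrable (fun ω => (1 - Z ω) * Y ω / (1 - eX ω) + Z ω * del0 ω) P)
    (hint0d : Integrable (fun ω => mu0 ω + (1 - Z ω) * (Y ω - mu0 ω) / (1 - eX ω)
        + Z ω * del0 ω) P) :
    (∫ ω, Y1 ω ∂P = ∫ ω, mu1 ω ∂P - ∫ ω, (1 - Z ω) * del1 ω ∂P)
    ∧ (∫ ω, Y1 ω ∂P = ∫ ω, (Z ω * Y ω / eX ω - (1 - Z ω) * del1 ω) ∂P)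
    ∧ (∫ ω, Y1 ω ∂P
        = ∫ ω, (mu1 ω + Z ω * (Y ω - mu1 ω) / eX ω - (1 - Z ω) * del1 ω) ∂P)
    ∧ (∫ ω, Y0 ω ∂P = ∫ ω, mu0 ω ∂P + ∫ ω, Z ω * del0 ω ∂P)
    ∧ (∫ ω, Y0 ω ∂P = ∫ ω, ((1 - Z ω) * Y ω / (1 - eX ω) + Z ω * del0 ω) ∂P)
    ∧ (∫ ω, Y0 ω ∂P
        = ∫ ω, (mu0 ω + (1 - Z ω) * (Y ω - mu0 ω) / (1 - eX ω) + Z ω * del0 ω) ∂P) := by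
  have hZY1 (ω : Ω) : Z ω * Y ω = Z ω * Y1 ω := by
    rcases hZ01 ω with h | h <;> simp [hYdef ω, h]
  have hZY0 (ω : Ω) : (1 - Z ω) * Y ω = (1 - Z ω) * Y0 ω := by
    rcases hZ01 ω with h | h <;> simp [hYdef ω, h]
  have treated : DifferenceScaleArm P mX Z Y1 Y eX mu1 del1 :=
    ⟨hZmeas, hZ01, hY1int, hZY1, heXmeas, heX, hov.mono fun _ h => h.1.ne', hmu1meas, hmu1,
      hdel1meas, hdel1⟩
  have control := DifferenceScaleArm.of_control hmX hZmeas hZ01 hY0int hZY0 heXmeas heX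
    (hov.mono fun _ h => h.2.ne) hmu0meas hmu0 hdel0meas hdel0
  exact ⟨treated.integral_potential hmX hint1a hint1b,
    treated.integral_potential_eq_ipw hmX hint1a hint1b hint1c,
    treated.integral_potential_eq_aipw hmX hint1a hint1b hint1c hint1d,
    control.integral_potential_eq_of_control hmX hint0a hint0b hint0c hint0d⟩

/-- Identification under sensitivity parameters on the difference scale (Section 6.1). -/
theorem difference_scale_identification
    {Ω : Type*} [F : MeasurableSpace Ω] (P : Measure Ω) [IsProbabilityMeasure P]
    (Z Y1 Y0 Y : Ω → ℝ)
    (hZmeas : Measurable Z) (hZ01 : ∀ ω, Z ω = 0 ∨ Z ω = 1)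
    (hY1int : Integrable Y1 P) (hY0int : Integrable Y0 P)
    (hYdef : ∀ ω, Y ω = Z ω * Y1 ω + (1 - Z ω) * Y0 ω)
    (mX : MeasurableSpace Ω) (hmX : mX ≤ F)
    (eX : Ω → ℝ) (heXmeas : Measurable[mX] eX) (heX : eX =ᵐ[P] P[Z|mX])
    (hov : ∀ᵐ ω ∂P, 0 < eX ω ∧ eX ω < 1)
    (mu1 mu0 : Ω → ℝ) (hmu1meas : Measurable[mX] mu1) (hmu0meas : Measurable[mX] mu0)
    (hmu1 : (fun ω => mu1 ω * eX ω) =ᵐ[P] P[fun ω => Z ω * Y ω|mX])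
    (hmu0 : (fun ω => mu0 ω * (1 - eX ω)) =ᵐ[P] P[fun ω => (1 - Z ω) * Y ω|mX])
    (del1 del0 : Ω → ℝ)
    (hdel1meas : Measurable[mX] del1) (hdel0meas : Measurable[mX] del0)
    (hdel1int : Integrable del1 P) (hdel0int : Integrable del0 P)
    (hdel1 : ∀ᵐ ω ∂P, (1 - eX ω) * (P[fun ω' => Z ω' * Y1 ω'|mX]) ω
        - eX ω * (P[fun ω' => (1 - Z ω') * Y1 ω'|mX]) ω
        = del1 ω * eX ω * (1 - eX ω))
    (hdel0 : ∀ᵐ ω ∂P, (1 - eX ω) * (P[fun ω' => Z ω' * Y0 ω'|mX]) ω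
        - eX ω * (P[fun ω' => (1 - Z ω') * Y0 ω'|mX]) ω
        = del0 ω * eX ω * (1 - eX ω))
    (hint1a : Integrable mu1 P)
    (hint1b : Integrable (fun ω => (1 - Z ω) * del1 ω) P)
    (hint1c : Integrable (fun ω => Z ω * Y ω / eX ω - (1 - Z ω) * del1 ω) P)
    (hint1d : Integrable (fun ω => mu1 ω + Z ω * (Y ω - mu1 ω) / eX ω
        - (1 - Z ω) * del1 ω) P)
    (hint0a : Integrable mu0 P)
    (hint0b : Integrable (fun ω => Z ω * del0 ω) P)
    (hint0c : Integrable (fun ω => (1 - Z ω) * Y ω / (1 - eX ω) + Z ω * del0 ω) P)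
    (hint0d : Integrable (fun ω => mu0 ω + (1 - Z ω) * (Y ω - mu0 ω) / (1 - eX ω)
        + Z ω * del0 ω) P) :
    (∫ ω, Y1 ω ∂P = ∫ ω, mu1 ω ∂P - ∫ ω, (1 - Z ω) * del1 ω ∂P)
    ∧ (∫ ω, Y1 ω ∂P = ∫ ω, (Z ω * Y ω / eX ω - (1 - Z ω) * del1 ω) ∂P)
    ∧ (∫ ω, Y1 ω ∂P
        = ∫ ω, (mu1 ω + Z ω * (Y ω - mu1 ω) / eX ω - (1 - Z ω) * del1 ω) ∂P)
    ∧ (∫ ω, Y0 ω ∂P = ∫ ω, mu0 ω ∂P + ∫ ω, Z ω * del0 ω ∂P)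
    ∧ (∫ ω, Y0 ω ∂P = ∫ ω, ((1 - Z ω) * Y ω / (1 - eX ω) + Z ω * del0 ω) ∂P)
    ∧ (∫ ω, Y0 ω ∂P
        = ∫ ω, (mu0 ω + (1 - Z ω) * (Y ω - mu0 ω) / (1 - eX ω) + Z ω * del0 ω) ∂P) :=
  difference_scale_identification_general (F := F) P Z Y1 Y0 Y hZmeas hZ01 hY1int hY0int hYdef mX
    hmX eX heXmeas heX hov mu1 mu0 hmu1meas hmu0meas hmu1 hmu0 del1 del0 hdel1meas hdel0meas hdel1
    hdel0 hint1a hint1b hint1c hint1d hint0a hint0b hint0c hint0d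
end

section
/- (Connection to the treatment selection model for a binary outcome, Section S1.8.) Suppose the potential outcome Y(1) takes values in {0,1}. Let e⁽¹⁾(X) and e⁽⁰⁾(X) be 𝔛-measurable functions satisfying e⁽¹⁾(X)·E[Y(1) ∣ 𝔛] = E[Z·Y(1) ∣ 𝔛] and e⁽⁰⁾(X)·E[1−Y(1) ∣ 𝔛] = E[Z·(1−Y(1)) ∣ 𝔛] almost surely (these are versions of the selection probabilities E[Z ∣ X, Y(1)=1] and E[Z ∣ X, Y(1)=0]). Then, with w1(X) = e(X) + (1−e(X))/ε1(X), almost surely e(X) = e⁽¹⁾(X)·w1(X)·μ1(X) + e⁽⁰⁾(X)·(1 − w1(X)·μ1(X)). -/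
/-!
Since `Z * Y = Z * Y(1)`, the outcome model gives `μ1 * e = E[Z Y(1) | X]`, and the sensitivity
relation turns into `(1 - e) * μ1 = ε1 * E[(1 - Z) Y(1) | X]`. Adding the two shows
`w1 * μ1 = E[Y(1) | X]`, so the claimed identity is the decomposition
`e = E[Z Y(1) | X] + E[Z (1 - Y(1)) | X]` rewritten through the selection probabilities.
-/

open MeasureTheory Filter

lemma mul_select_eq_mul_of_eq_zero_or_eq_one {z a b : ℝ} (hz : z = 0 ∨ z = 1) :
    z * (z * a + (1 - z) * b) = z * a := by
  rcases hz with rfl | rfl <;> ring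

lemma sensitivity_weight_mul_eq_add {e ε μ A B : ℝ} (he : e ≠ 0) (hε : ε ≠ 0)
    (hμ : μ * e = A) (hsens : (1 - e) * A = ε * e * B) :
    (e + (1 - e) / ε) * μ = A + B := by
  subst hμ
  have hμB : (1 - e) * μ = ε * B := mul_right_cancel₀ he (by linear_combination hsens)
  field_simp
  linear_combination hμB

section ConditionalExpectation

variable {Ω : Type*} {m m₀ : MeasurableSpace Ω} {P : Measure Ω}

lemma integrable_mul_of_eq_zero_or_eq_one {Z f : Ω → ℝ} (hZ : Measurable Z)
    (hZ01 : ∀ ω, Z ω = 0 ∨ Z ω = 1) (hf : Integrable f P) :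
    Integrable (fun ω => Z ω * f ω) P :=
  hf.bdd_mul (c := 1) hZ.aestronglyMeasurable
    (ae_of_all _ fun ω => by rcases hZ01 ω with h | h <;> simp [h])

lemma condExp_eq_condExp_mul_add_condExp_one_sub_mul {Z f : Ω → ℝ} (hZ : Measurable Z)
    (hZ01 : ∀ ω, Z ω = 0 ∨ Z ω = 1) (hf : Integrable f P) :
    P[f|m] =ᵐ[P] P[fun ω => Z ω * f ω|m] + P[fun ω => (1 - Z ω) * f ω|m] := by
  have hZ01' : ∀ ω, 1 - Z ω = 0 ∨ 1 - Z ω = 1 := fun ω => by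
    rcases hZ01 ω with h | h <;> simp [h]
  have hsplit : f = (fun ω => Z ω * f ω) + fun ω => (1 - Z ω) * f ω := by
    funext ω
    simp only [Pi.add_apply]
    ring
  conv_lhs => rw [hsplit]
  exact condExp_add (integrable_mul_of_eq_zero_or_eq_one hZ hZ01 hf)
    (integrable_mul_of_eq_zero_or_eq_one (measurable_const.sub hZ) hZ01' hf) m

lemma condExp_mul_one_sub {g f : Ω → ℝ} (hg : Integrable g P)
    (hgf : Integrable (fun ω => g ω * f ω) P) :
    P[fun ω => g ω * (1 - f ω)|m] =ᵐ[P] P[g|m] - P[fun ω => g ω * f ω|m] := by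
  have hsplit : (fun ω => g ω * (1 - f ω)) = g - fun ω => g ω * f ω := by
    funext ω
    simp only [Pi.sub_apply]
    ring
  rw [hsplit]
  exact condExp_sub hg hgf m

lemma condExp_const_sub [IsFiniteMeasure P] (hm : m ≤ m₀)
    {f : Ω → ℝ} (hf : Integrable f P) (c : ℝ) :
    P[fun ω => c - f ω|m] =ᵐ[P] fun ω => c - P[f|m] ω := by
  refine (condExp_sub (integrable_const c) hf m).trans ?_
  rw [condExp_const hm]
  rfl

end ConditionalExpectation

theorem treatment_selection_model_binary_outcome_general
    {Ω : Type*} [F : MeasurableSpace Ω] (P : Measure Ω) [IsProbabilityMeasure P]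
    (Z Y1 Y0 Y : Ω → ℝ)
    (hZmeas : Measurable Z) (hZ01 : ∀ ω, Z ω = 0 ∨ Z ω = 1)
    (hY1int : Integrable Y1 P)
    (hYdef : ∀ ω, Y ω = Z ω * Y1 ω + (1 - Z ω) * Y0 ω)
    (mX : MeasurableSpace Ω) (hmX : mX ≤ F)
    (eX : Ω → ℝ) (heX : eX =ᵐ[P] P[Z|mX])
    (hov : ∀ᵐ ω ∂P, 0 < eX ω ∧ eX ω < 1)
    (mu1 : Ω → ℝ)
    (hmu1 : (fun ω => mu1 ω * eX ω) =ᵐ[P] P[fun ω => Z ω * Y ω|mX])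
    (eps1 : Ω → ℝ)
    (heps1pos : ∀ᵐ ω ∂P, 0 < eps1 ω)
    (hsens1 : ∀ᵐ ω ∂P, (1 - eX ω) * (P[fun ω' => Z ω' * Y1 ω'|mX]) ω
        = eps1 ω * eX ω * (P[fun ω' => (1 - Z ω') * Y1 ω'|mX]) ω)
    (e1sel e0sel : Ω → ℝ)
    (he1sel : (fun ω => e1sel ω * (P[Y1|mX]) ω)
        =ᵐ[P] P[fun ω => Z ω * Y1 ω|mX])
    (he0sel : (fun ω => e0sel ω * (P[fun ω' => 1 - Y1 ω'|mX]) ω)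
        =ᵐ[P] P[fun ω => Z ω * (1 - Y1 ω)|mX]) :
    ∀ᵐ ω ∂P, eX ω
      = e1sel ω * ((eX ω + (1 - eX ω) / eps1 ω) * mu1 ω)
        + e0sel ω * (1 - (eX ω + (1 - eX ω) / eps1 ω) * mu1 ω) := by
  have hZ : Integrable Z P := by
    simpa using integrable_mul_of_eq_zero_or_eq_one hZmeas hZ01 (integrable_const (1 : ℝ))
  have hZY1 := integrable_mul_of_eq_zero_or_eq_one hZmeas hZ01 hY1int
  have hZY : P[fun ω => Z ω * Y ω|mX] =ᵐ[P] P[fun ω => Z ω * Y1 ω|mX] :=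
    condExp_congr_ae (ae_of_all _ fun ω => by
      dsimp only
      rw [hYdef ω, mul_select_eq_mul_of_eq_zero_or_eq_one (hZ01 ω)])
  filter_upwards [heX, hov, heps1pos, hmu1.trans hZY, hsens1, he1sel, he0sel,
    condExp_eq_condExp_mul_add_condExp_one_sub_mul hZmeas hZ01 hY1int (m := mX),
    condExp_const_sub hmX hY1int 1, condExp_mul_one_sub hZ hZY1 (m := mX)]
    with ω heω hovω hεω hμω hsensω he1ω he0ω hY1ω hcomplω hZcomplω
  rw [Pi.add_apply] at hY1ω
  rw [sensitivity_weight_mul_eq_add hovω.1.ne' hεω.ne' hμω hsensω, ← hY1ω, ← hcomplω, he1ω,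
    he0ω, hZcomplω, heω, Pi.sub_apply]
  ring

/-- Connection to the treatment selection model for a binary outcome (Section S1.8). -/
theorem treatment_selection_model_binary_outcome
    {Ω : Type*} [F : MeasurableSpace Ω] (P : Measure Ω) [IsProbabilityMeasure P]
    (Z Y1 Y0 Y : Ω → ℝ)
    (hZmeas : Measurable Z) (hZ01 : ∀ ω, Z ω = 0 ∨ Z ω = 1)
    (hY1int : Integrable Y1 P) (hY0int : Integrable Y0 P)
    (hYdef : ∀ ω, Y ω = Z ω * Y1 ω + (1 - Z ω) * Y0 ω)
    (mX : MeasurableSpace Ω) (hmX : mX ≤ F)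
    (eX : Ω → ℝ) (heXmeas : Measurable[mX] eX) (heX : eX =ᵐ[P] P[Z|mX])
    (hov : ∀ᵐ ω ∂P, 0 < eX ω ∧ eX ω < 1)
    (mu1 : Ω → ℝ) (hmu1meas : Measurable[mX] mu1)
    (hmu1 : (fun ω => mu1 ω * eX ω) =ᵐ[P] P[fun ω => Z ω * Y ω|mX])
    (eps1 : Ω → ℝ) (heps1meas : Measurable[mX] eps1)
    (heps1pos : ∀ᵐ ω ∂P, 0 < eps1 ω)
    (hsens1 : ∀ᵐ ω ∂P, (1 - eX ω) * (P[fun ω' => Z ω' * Y1 ω'|mX]) ω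
        = eps1 ω * eX ω * (P[fun ω' => (1 - Z ω') * Y1 ω'|mX]) ω)
    (hY1bin : ∀ ω, Y1 ω = 0 ∨ Y1 ω = 1)
    (e1sel e0sel : Ω → ℝ)
    (he1selmeas : Measurable[mX] e1sel) (he0selmeas : Measurable[mX] e0sel)
    (he1sel : (fun ω => e1sel ω * (P[Y1|mX]) ω)
        =ᵐ[P] P[fun ω => Z ω * Y1 ω|mX])
    (he0sel : (fun ω => e0sel ω * (P[fun ω' => 1 - Y1 ω'|mX]) ω)
        =ᵐ[P] P[fun ω => Z ω * (1 - Y1 ω)|mX]) :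
    ∀ᵐ ω ∂P, eX ω
      = e1sel ω * ((eX ω + (1 - eX ω) / eps1 ω) * mu1 ω)
        + e0sel ω * (1 - (eX ω + (1 - eX ω) / eps1 ω) * mu1 ω) :=
  treatment_selection_model_binary_outcome_general (F := F) P Z Y1 Y0 Y hZmeas hZ01 hY1int hYdef mX
    hmX eX heX hov mu1 hmu1 eps1 heps1pos hsens1 e1sel e0sel he1sel he0sel
end

section
/- (Calibration identity under unconfoundedness, Section 4.1.) Assume unconfoundedness: Z is conditionally independent of (Y(1), Y(0)) given 𝔛. Then for z ∈ {0,1} and any sub-σ-algebra 𝒢 ⊆ 𝔛, one has almost surely E[Z·Y(z) ∣ 𝒢] = E[Z·μ_z(X) ∣ 𝒢] and E[(1−Z)·Y(z) ∣ 𝒢] = E[(1−Z)·μ_z(X) ∣ 𝒢]. Consequently, the leave-covariates-out sensitivity parameter satisfies, almost surely on the set where the denominators are nonzero, ε_z(𝒢) := ( E[Z·Y(z) ∣ 𝒢]·E[1−Z ∣ 𝒢] ) / ( E[(1−Z)·Y(z) ∣ 𝒢]·E[Z ∣ 𝒢] ) = ( E[Z·μ_z(X) ∣ 𝒢]·E[1−Z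 ∣ 𝒢] ) / ( E[(1−Z)·μ_z(X) ∣ 𝒢]·E[Z ∣ 𝒢] ), i.e., ε_z(X_{−j}) = E[μ_z(X) ∣ Z=1, X_{−j}] / E[μ_z(X) ∣ Z=0, X_{−j}]. -/
/-!
Given `𝔛`, the treatment `Z` is independent of each potential outcome `Y(z)`; disintegrating `P`
along the conditional expectation kernel of `𝔛` turns this into genuine independence under almost
every kernel measure, so conditional expectations of products factor:
`E[Z·Y(z) | 𝔛] = e(X)·E[Y(z) | 𝔛]`. Since `Z·Y = Z·Y(1)` and `(1 - Z)·Y = (1 - Z)·Y(0)`, the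
defining identities of `μ₁, μ₀` then read `μ_z·e = e·E[Y(z) | 𝔛]` (with `1 - e` for `z = 0`), and
overlap lets us cancel, so `μ_z(X) = E[Y(z) | 𝔛]`. Pulling the `𝔛`-measurable factor back in gives
`E[Z·Y(z) | 𝔛] = E[Z·μ_z(X) | 𝔛]`, and likewise for `1 - Z`; the tower property carries these
identities down to `𝒢`, and the ratio identity follows by substitution.
-/

open Filter MeasureTheory ProbabilityTheory

lemma MeasureTheory.condExp_ae_eq_of_condExp_ae_eq_of_le {α : Type*}
    {m₁ m₂ m₀ : MeasurableSpace α} {μ : Measure α} {f g : α → ℝ} (hm₁₂ : m₁ ≤ m₂)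
    (hm₂ : m₂ ≤ m₀) [SigmaFinite (μ.trim hm₂)] (h : μ[f|m₂] =ᵐ[μ] μ[g|m₂]) :
    μ[f|m₁] =ᵐ[μ] μ[g|m₁] :=
  (condExp_condExp_of_le hm₁₂ hm₂).symm.trans
    ((condExp_congr_ae h).trans (condExp_condExp_of_le hm₁₂ hm₂))

namespace ProbabilityTheory

variable {Ω : Type*} {m mΩ : MeasurableSpace Ω} [StandardBorelSpace Ω] {hm : m ≤ mΩ}
  {μ : Measure Ω} [IsFiniteMeasure μ]

lemma CondIndepFun.congr {β γ : Type*} [MeasurableSpace β] [MeasurableSpace γ]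
    {f f' : Ω → β} {g g' : Ω → γ} (h : CondIndepFun m hm f g μ)
    (hf : f =ᵐ[μ] f') (hg : g =ᵐ[μ] g') : CondIndepFun m hm f' g' μ := by
  rw [← condExpKernel_comp_trim (μ := μ) hm] at hf hg
  exact Kernel.IndepFun.congr' h (Measure.ae_ae_of_ae_comp hf) (Measure.ae_ae_of_ae_comp hg)

lemma CondIndepFun.ae_indepFun_condExpKernel {β γ : Type*} [MeasurableSpace β]
    [MeasurableSpace γ] [MeasurableSpace.CountableOrCountablyGenerated Ω (β × γ)]
    {f : Ω → β} {g : Ω → γ}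
    (hf : Measurable f) (hg : Measurable g) (h : CondIndepFun m hm f g μ) :
    ∀ᵐ ω ∂μ.trim hm, IndepFun f g (condExpKernel μ m ω) := by
  filter_upwards [(condIndepFun_iff_map_prod_eq_prod_map_map hf hg).mp h] with ω hω
  rw [indepFun_iff_map_prod_eq_prod_map_map hf.aemeasurable hg.aemeasurable]
  simpa [Kernel.map_apply _ (hf.prodMk hg), Kernel.prod_apply, Kernel.map_apply _ hf,
    Kernel.map_apply _ hg] using hω

lemma condExp_mul_ae_eq_mul_of_condIndepFun {f g : Ω → ℝ} (hfg : CondIndepFun m hm f g μ)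
    (hf : Integrable f μ) (hg : Integrable g μ) (hfg_int : Integrable (f * g) μ) :
    μ[f * g|m] =ᵐ[μ] μ[f|m] * μ[g|m] := by
  obtain ⟨f', hf'_meas, hff'⟩ := hf.1
  obtain ⟨g', hg'_meas, hgg'⟩ := hg.1
  have hind := (hfg.congr hff' hgg').ae_indepFun_condExpKernel hf'_meas.measurable
    hg'_meas.measurable
  calc μ[f * g|m] =ᵐ[μ] μ[f' * g'|m] := condExp_congr_ae (hff'.mul hgg')
    _ =ᵐ[μ] μ[f'|m] * μ[g'|m] := by
      filter_upwards [condExp_ae_eq_integral_condExpKernel hm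
          (hfg_int.congr (hff'.mul hgg')),
        condExp_ae_eq_integral_condExpKernel hm (hf.congr hff'),
        condExp_ae_eq_integral_condExpKernel hm (hg.congr hgg'),
        ae_of_ae_trim hm hind] with ω h_mul h_left h_right h_indep
      rw [Pi.mul_apply, h_mul, h_left, h_right]
      exact h_indep.integral_mul_eq_mul_integral hf'_meas.aestronglyMeasurable
        hg'_meas.aestronglyMeasurable
    _ =ᵐ[μ] μ[f|m] * μ[g|m] := ((condExp_congr_ae hff').mul (condExp_congr_ae hgg')).symm

lemma condExp_mul_ae_eq_condExp_mul_of_condIndepFun {f g r : Ω → ℝ}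
    (hfg : CondIndepFun m hm f g μ) (hf : Integrable f μ) (hg : Integrable g μ)
    (hfg_int : Integrable (f * g) μ) (hr : r =ᵐ[μ] μ[g|m]) (hfr_int : Integrable (f * r) μ) :
    μ[f * g|m] =ᵐ[μ] μ[f * r|m] :=
  calc μ[f * g|m] =ᵐ[μ] μ[f|m] * μ[g|m] :=
        condExp_mul_ae_eq_mul_of_condIndepFun hfg hf hg hfg_int
    _ =ᵐ[μ] μ[f|m] * r := EventuallyEq.rfl.mul hr.symm
    _ =ᵐ[μ] μ[f * r|m] :=
        (condExp_mul_of_aestronglyMeasurable_right ⟨_, stronglyMeasurable_condExp, hr⟩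
          hfr_int hf).symm

lemma ae_eq_condExp_of_mul_ae_eq_condExp_mul {f g r e : Ω → ℝ}
    (hfg : CondIndepFun m hm f g μ) (hf : Integrable f μ) (hg : Integrable g μ)
    (hfg_int : Integrable (f * g) μ) (he : e =ᵐ[μ] μ[f|m]) (he_ne : ∀ᵐ ω ∂μ, e ω ≠ 0)
    (hr : r * e =ᵐ[μ] μ[f * g|m]) : r =ᵐ[μ] μ[g|m] := by
  filter_upwards [hr, condExp_mul_ae_eq_mul_of_condIndepFun hfg hf hg hfg_int, he, he_ne]
    with ω h_r h_mul h_e h_ne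
  refine mul_right_cancel₀ h_ne ?_
  simp only [Pi.mul_apply] at h_r h_mul
  rw [h_r, h_mul, h_e, mul_comm]

end ProbabilityTheory

theorem calibration_under_unconfoundedness_general
    {Ω : Type*} [F : MeasurableSpace Ω] [StandardBorelSpace Ω]
    (P : Measure Ω) [IsProbabilityMeasure P]
    (Z Y1 Y0 Y : Ω → ℝ)
    (hZmeas : Measurable Z) (hZ01 : ∀ ω, Z ω = 0 ∨ Z ω = 1)
    (hY1int : Integrable Y1 P) (hY0int : Integrable Y0 P)
    (hYdef : ∀ ω, Y ω = Z ω * Y1 ω + (1 - Z ω) * Y0 ω)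
    (mX : MeasurableSpace Ω) (hmX : mX ≤ F)
    (eX : Ω → ℝ) (heX : eX =ᵐ[P] P[Z|mX])
    (hov : ∀ᵐ ω ∂P, 0 < eX ω ∧ eX ω < 1)
    (mu1 mu0 : Ω → ℝ)
    (hmu1 : (fun ω => mu1 ω * eX ω) =ᵐ[P] P[fun ω => Z ω * Y ω|mX])
    (hmu0 : (fun ω => mu0 ω * (1 - eX ω)) =ᵐ[P] P[fun ω => (1 - Z ω) * Y ω|mX])
    (hunconf : ProbabilityTheory.CondIndepFun mX hmX Z (fun ω => (Y1 ω, Y0 ω)) P)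
    (mG : MeasurableSpace Ω) (hmG : mG ≤ mX)
    (hintZmu1 : Integrable (fun ω => Z ω * mu1 ω) P)
    (hintZmu0 : Integrable (fun ω => Z ω * mu0 ω) P)
    (hint1mZmu1 : Integrable (fun ω => (1 - Z ω) * mu1 ω) P)
    (hint1mZmu0 : Integrable (fun ω => (1 - Z ω) * mu0 ω) P) :
    (P[fun ω => Z ω * Y1 ω|mG] =ᵐ[P] P[fun ω => Z ω * mu1 ω|mG])
    ∧ (P[fun ω => (1 - Z ω) * Y1 ω|mG] =ᵐ[P] P[fun ω => (1 - Z ω) * mu1 ω|mG])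
    ∧ (P[fun ω => Z ω * Y0 ω|mG] =ᵐ[P] P[fun ω => Z ω * mu0 ω|mG])
    ∧ (P[fun ω => (1 - Z ω) * Y0 ω|mG] =ᵐ[P] P[fun ω => (1 - Z ω) * mu0 ω|mG])
    ∧ (∀ᵐ ω ∂P,
        (P[fun ω' => (1 - Z ω') * Y1 ω'|mG]) ω ≠ 0 →
        (P[fun ω' => (1 - Z ω') * mu1 ω'|mG]) ω ≠ 0 →
        (P[Z|mG]) ω ≠ 0 →
        (P[fun ω' => Z ω' * Y1 ω'|mG]) ω * (P[fun ω' => 1 - Z ω'|mG]) ω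
            / ((P[fun ω' => (1 - Z ω') * Y1 ω'|mG]) ω * (P[Z|mG]) ω)
          = (P[fun ω' => Z ω' * mu1 ω'|mG]) ω * (P[fun ω' => 1 - Z ω'|mG]) ω
            / ((P[fun ω' => (1 - Z ω') * mu1 ω'|mG]) ω * (P[Z|mG]) ω))
    ∧ (∀ᵐ ω ∂P,
        (P[fun ω' => (1 - Z ω') * Y0 ω'|mG]) ω ≠ 0 →
        (P[fun ω' => (1 - Z ω') * mu0 ω'|mG]) ω ≠ 0 →
        (P[Z|mG]) ω ≠ 0 →
        (P[fun ω' => Z ω' * Y0 ω'|mG]) ω * (P[fun ω' => 1 - Z ω'|mG]) ω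
            / ((P[fun ω' => (1 - Z ω') * Y0 ω'|mG]) ω * (P[Z|mG]) ω)
          = (P[fun ω' => Z ω' * mu0 ω'|mG]) ω * (P[fun ω' => 1 - Z ω'|mG]) ω
            / ((P[fun ω' => (1 - Z ω') * mu0 ω'|mG]) ω * (P[Z|mG]) ω)) := by
  set W : Ω → ℝ := fun ω => 1 - Z ω
  have hZ_bdd : ∀ ω, ‖Z ω‖ ≤ 1 := fun ω => by rcases hZ01 ω with h | h <;> simp [h]
  have hW_bdd : ∀ ω, ‖W ω‖ ≤ 1 := fun ω => by rcases hZ01 ω with h | h <;> simp [W, h]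
  have hZ_int : Integrable Z P := .of_bound hZmeas.aestronglyMeasurable 1 (ae_of_all _ hZ_bdd)
  have hW_int : Integrable W P := (integrable_const 1).sub hZ_int
  have hZY : (fun ω => Z ω * Y ω) = Z * Y1 := by
    funext ω; rcases hZ01 ω with h | h <;> simp [hYdef, h]
  have hWY : (fun ω => W ω * Y ω) = W * Y0 := by
    funext ω; rcases hZ01 ω with h | h <;> simp [W, hYdef, h]
  have hW_condExp : (fun ω => 1 - eX ω) =ᵐ[P] P[W|mX] := by
    filter_upwards [condExp_sub (integrable_const 1) hZ_int mX, heX] with ω h h'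
    rw [show W = (fun _ => (1 : ℝ)) - Z from rfl, h, Pi.sub_apply, condExp_const hmX, h']
  have hCI1 : CondIndepFun mX hmX Z Y1 P := hunconf.comp measurable_id measurable_fst
  have hCI0 : CondIndepFun mX hmX Z Y0 P := hunconf.comp measurable_id measurable_snd
  have hW_meas : Measurable fun z : ℝ => 1 - z := measurable_const.sub measurable_id
  have hmu1_eq : mu1 =ᵐ[P] P[Y1|mX] :=
    ae_eq_condExp_of_mul_ae_eq_condExp_mul hCI1 hZ_int hY1int
      (hY1int.bdd_mul hZ_int.1 (ae_of_all _ hZ_bdd)) heX (hov.mono fun _ h => h.1.ne')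
      (hZY ▸ hmu1)
  have hmu0_eq : mu0 =ᵐ[P] P[Y0|mX] :=
    ae_eq_condExp_of_mul_ae_eq_condExp_mul (hCI0.comp hW_meas measurable_id) hW_int hY0int
      (hY0int.bdd_mul hW_int.1 (ae_of_all _ hW_bdd)) hW_condExp
      (hov.mono fun _ h => sub_ne_zero.mpr h.2.ne') (hWY ▸ hmu0)
  have calibrate : ∀ {V D r : Ω → ℝ}, CondIndepFun mX hmX V D P → Integrable V P →
      (∀ ω, ‖V ω‖ ≤ 1) → Integrable D P → r =ᵐ[P] P[D|mX] → Integrable (V * r) P →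
      P[V * D|mG] =ᵐ[P] P[V * r|mG] := fun hVD hV hV_bdd hD hr hVr =>
    condExp_ae_eq_of_condExp_ae_eq_of_le hmG hmX <|
      condExp_mul_ae_eq_condExp_mul_of_condIndepFun hVD hV hD
        (hD.bdd_mul hV.1 (ae_of_all _ hV_bdd)) hr hVr
  have hZY1_cal := calibrate hCI1 hZ_int hZ_bdd hY1int hmu1_eq hintZmu1
  have hWY1_cal :=
    calibrate (hCI1.comp hW_meas measurable_id) hW_int hW_bdd hY1int hmu1_eq hint1mZmu1
  have hZY0_cal := calibrate hCI0 hZ_int hZ_bdd hY0int hmu0_eq hintZmu0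
  have hWY0_cal :=
    calibrate (hCI0.comp hW_meas measurable_id) hW_int hW_bdd hY0int hmu0_eq hint1mZmu0
  refine ⟨hZY1_cal, hWY1_cal, hZY0_cal, hWY0_cal, ?_, ?_⟩
  · filter_upwards [hZY1_cal, hWY1_cal] with ω h1 h2 using fun _ _ _ =>
      congrArg₂ (fun a b => a * _ / (b * _)) h1 h2
  · filter_upwards [hZY0_cal, hWY0_cal] with ω h3 h4 using fun _ _ _ =>
      congrArg₂ (fun a b => a * _ / (b * _)) h3 h4

/-- Calibration identity under unconfoundedness (Section 4.1). -/
theorem calibration_under_unconfoundedness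
    {Ω : Type*} [F : MeasurableSpace Ω] [StandardBorelSpace Ω]
    (P : Measure Ω) [IsProbabilityMeasure P]
    (Z Y1 Y0 Y : Ω → ℝ)
    (hZmeas : Measurable Z) (hZ01 : ∀ ω, Z ω = 0 ∨ Z ω = 1)
    (hY1int : Integrable Y1 P) (hY0int : Integrable Y0 P)
    (hYdef : ∀ ω, Y ω = Z ω * Y1 ω + (1 - Z ω) * Y0 ω)
    (mX : MeasurableSpace Ω) (hmX : mX ≤ F)
    (eX : Ω → ℝ) (heXmeas : Measurable[mX] eX) (heX : eX =ᵐ[P] P[Z|mX])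
    (hov : ∀ᵐ ω ∂P, 0 < eX ω ∧ eX ω < 1)
    (mu1 mu0 : Ω → ℝ) (hmu1meas : Measurable[mX] mu1) (hmu0meas : Measurable[mX] mu0)
    (hmu1 : (fun ω => mu1 ω * eX ω) =ᵐ[P] P[fun ω => Z ω * Y ω|mX])
    (hmu0 : (fun ω => mu0 ω * (1 - eX ω)) =ᵐ[P] P[fun ω => (1 - Z ω) * Y ω|mX])
    (hunconf : ProbabilityTheory.CondIndepFun mX hmX Z (fun ω => (Y1 ω, Y0 ω)) P)
    (mG : MeasurableSpace Ω) (hmG : mG ≤ mX)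
    (hintZmu1 : Integrable (fun ω => Z ω * mu1 ω) P)
    (hintZmu0 : Integrable (fun ω => Z ω * mu0 ω) P)
    (hint1mZmu1 : Integrable (fun ω => (1 - Z ω) * mu1 ω) P)
    (hint1mZmu0 : Integrable (fun ω => (1 - Z ω) * mu0 ω) P) :
    (P[fun ω => Z ω * Y1 ω|mG] =ᵐ[P] P[fun ω => Z ω * mu1 ω|mG])
    ∧ (P[fun ω => (1 - Z ω) * Y1 ω|mG] =ᵐ[P] P[fun ω => (1 - Z ω) * mu1 ω|mG])
    ∧ (P[fun ω => Z ω * Y0 ω|mG] =ᵐ[P] P[fun ω => Z ω * mu0 ω|mG])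
    ∧ (P[fun ω => (1 - Z ω) * Y0 ω|mG] =ᵐ[P] P[fun ω => (1 - Z ω) * mu0 ω|mG])
    ∧ (∀ᵐ ω ∂P,
        (P[fun ω' => (1 - Z ω') * Y1 ω'|mG]) ω ≠ 0 →
        (P[fun ω' => (1 - Z ω') * mu1 ω'|mG]) ω ≠ 0 →
        (P[Z|mG]) ω ≠ 0 →
        (P[fun ω' => Z ω' * Y1 ω'|mG]) ω * (P[fun ω' => 1 - Z ω'|mG]) ω
            / ((P[fun ω' => (1 - Z ω') * Y1 ω'|mG]) ω * (P[Z|mG]) ω)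
          = (P[fun ω' => Z ω' * mu1 ω'|mG]) ω * (P[fun ω' => 1 - Z ω'|mG]) ω
            / ((P[fun ω' => (1 - Z ω') * mu1 ω'|mG]) ω * (P[Z|mG]) ω))
    ∧ (∀ᵐ ω ∂P,
        (P[fun ω' => (1 - Z ω') * Y0 ω'|mG]) ω ≠ 0 →
        (P[fun ω' => (1 - Z ω') * mu0 ω'|mG]) ω ≠ 0 →
        (P[Z|mG]) ω ≠ 0 →
        (P[fun ω' => Z ω' * Y0 ω'|mG]) ω * (P[fun ω' => 1 - Z ω'|mG]) ω
            / ((P[fun ω' => (1 - Z ω') * Y0 ω'|mG]) ω * (P[Z|mG]) ω)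
          = (P[fun ω' => Z ω' * mu0 ω'|mG]) ω * (P[fun ω' => 1 - Z ω'|mG]) ω
            / ((P[fun ω' => (1 - Z ω') * mu0 ω'|mG]) ω * (P[Z|mG]) ω)) :=
  calibration_under_unconfoundedness_general (F := F) P Z Y1 Y0 Y hZmeas hZ01 hY1int hY0int hYdef mX
    hmX eX heX hov mu1 mu0 hmu1 hmu0 hunconf mG hmG hintZmu1 hintZmu0 hint1mZmu1 hint1mZmu0
end
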